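/- arXiv:1306.5516 — 10 statements merged into one kernel-verified Lean document; each statement's English description precedes it below -/
import Mathlib

section
/- Let f : [0,∞) → ℝ be s-convex in the second sense for some s ∈ (0,1], i.e., f(λx + (1-λ)y) ≤ λ^s f(x) + (1-λ)^s f(y) for all x,y ≥ 0 and λ ∈ [0,1]. If 0 ≤ a < b and f is integrable on [a,b], then 2^(s-1) f((a+b)/2) ≤ (1/(b-a)) ∫_a^b f(x) dx ≤ (f(a)+f(b))/(s+1). -/
/-!
Substituting `x = t a + (1 - t) b` turns the mean value `(b - a)⁻¹ ∫_a^b f` into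
`∫_0^1 f (t a + (1 - t) b)`. For the upper bound, integrate the s-convexity inequality
`f (t a + (1 - t) b) ≤ t^s f a + (1 - t)^s f b` over `t ∈ [0, 1]`, using
`∫_0^1 t^s = ∫_0^1 (1 - t)^s = 1 / (s + 1)`. For the lower bound, the midpoint `(a + b) / 2` is
the average of `t a + (1 - t) b` and `t b + (1 - t) a`, so
`f ((a + b) / 2) ≤ 2^{-s} (f (t a + (1 - t) b) + f (t b + (1 - t) a))`, and both terms integrate
to the mean value.
-/

open MeasureTheory intervalIntegral Set

def IsSConvexOn (s : ℝ) (D : Set ℝ) (f : ℝ → ℝ) : Prop :=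
  ∀ x ∈ D, ∀ y ∈ D, ∀ t ∈ Icc (0 : ℝ) 1, f (t * x + (1 - t) * y) ≤ t ^ s * f x + (1 - t) ^ s * f y

theorem IsSConvexOn.mono {s : ℝ} {D E : Set ℝ} {f : ℝ → ℝ} (hf : IsSConvexOn s E f) (hDE : D ⊆ E) :
    IsSConvexOn s D f :=
  fun x hx y hy t ht => hf x (hDE hx) y (hDE hy) t ht

theorem combo_mem_Icc {a b t : ℝ} (hab : a ≤ b) (ht : t ∈ Icc (0 : ℝ) 1) :
    t * a + (1 - t) * b ∈ Icc a b := by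
  obtain ⟨ht0, ht1⟩ := ht
  constructor <;> nlinarith

theorem combo_mem_Icc' {a b t : ℝ} (hab : a ≤ b) (ht : t ∈ Icc (0 : ℝ) 1) :
    t * b + (1 - t) * a ∈ Icc a b := by
  obtain ⟨ht0, ht1⟩ := ht
  constructor <;> nlinarith

theorem IntervalIntegrable.comp_combo {f : ℝ → ℝ} {a b : ℝ} (hab : a ≠ b)
    (hf : IntervalIntegrable f volume a b) :
    IntervalIntegrable (fun t => f (t * a + (1 - t) * b)) volume 0 1 := by
  have hba : a - b ≠ 0 := sub_ne_zero.mpr hab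
  have hcombo : (fun t => f (t * a + (1 - t) * b)) = fun t => f ((a - b) * t + b) := by
    funext t; ring_nf
  rw [hcombo]
  simpa [hba, sub_sub_cancel_left, div_self hba] using
    ((hf.comp_add_right b).comp_mul_left (c := a - b)).symm

theorem integral_comp_combo (f : ℝ → ℝ) {a b : ℝ} (hab : a ≠ b) :
    ∫ t in (0 : ℝ)..1, f (t * a + (1 - t) * b) = (b - a)⁻¹ * ∫ x in a..b, f x := by
  have hba : a - b ≠ 0 := sub_ne_zero.mpr hab
  have hcombo : ∀ t : ℝ, t * a + (1 - t) * b = (a - b) * t + b := fun t => by ring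
  simp only [hcombo, integral_comp_mul_add f hba b, mul_zero, zero_add, mul_one, sub_add_cancel,
    smul_eq_mul]
  rw [integral_symm a b, ← neg_sub b a, inv_neg, neg_mul_neg]

theorem integral_comp_combo_swap (f : ℝ → ℝ) {a b : ℝ} (hab : a ≠ b) :
    ∫ t in (0 : ℝ)..1, f (t * b + (1 - t) * a) = (b - a)⁻¹ * ∫ x in a..b, f x := by
  rw [integral_comp_combo f hab.symm, integral_symm a b, mul_neg, ← neg_mul, ← inv_neg, neg_sub]

theorem integral_rpow_zero_one {s : ℝ} (hs : -1 < s) : ∫ t in (0 : ℝ)..1, t ^ s = (s + 1)⁻¹ := by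
  rw [integral_rpow (Or.inl hs), Real.one_rpow, Real.zero_rpow (by linarith), sub_zero, one_div]

theorem integral_one_sub_rpow_zero_one {s : ℝ} (hs : -1 < s) :
    ∫ t in (0 : ℝ)..1, (1 - t) ^ s = (s + 1)⁻¹ := by
  rw [integral_comp_sub_left (fun x : ℝ => x ^ s) 1, sub_self, sub_zero, integral_rpow_zero_one hs]

namespace IsSConvexOn

variable {s a b : ℝ} {f : ℝ → ℝ}

theorem hermiteHadamard_left (hf : IsSConvexOn s (Icc a b) f) (hab : a < b)
    (hint : IntervalIntegrable f volume a b) :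
    (2 : ℝ) ^ (s - 1) * f ((a + b) / 2) ≤ (b - a)⁻¹ * ∫ x in a..b, f x := by
  have hscale : (2 : ℝ) ^ (s - 1) * (1 / 2) ^ s = 1 / 2 := by
    rw [Real.div_rpow zero_le_one zero_le_two, Real.one_rpow, Real.rpow_sub_one two_ne_zero]
    field_simp
  have hpoint : ∀ t ∈ Icc (0 : ℝ) 1, (2 : ℝ) ^ (s - 1) * f ((a + b) / 2) ≤
      (f (t * a + (1 - t) * b) + f (t * b + (1 - t) * a)) / 2 := by
    intro t ht
    have hmid := hf _ (combo_mem_Icc hab.le ht) _ (combo_mem_Icc' hab.le ht) (1 / 2)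
      ⟨by norm_num, by norm_num⟩
    rw [show (1 / 2 : ℝ) * (t * a + (1 - t) * b) + (1 - 1 / 2) * (t * b + (1 - t) * a) = (a + b) / 2
      by ring, show (1 - 1 / 2 : ℝ) = 1 / 2 by norm_num, ← mul_add] at hmid
    calc (2 : ℝ) ^ (s - 1) * f ((a + b) / 2)
        ≤ (2 : ℝ) ^ (s - 1) * ((1 / 2) ^ s * (f (t * a + (1 - t) * b) + f (t * b + (1 - t) * a))) :=
          mul_le_mul_of_nonneg_left hmid (by positivity)
      _ = (f (t * a + (1 - t) * b) + f (t * b + (1 - t) * a)) / 2 := by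
          rw [← mul_assoc, hscale]; ring
  have hmono := integral_mono_on zero_le_one intervalIntegrable_const
    (((hint.comp_combo hab.ne).add (hint.symm.comp_combo hab.ne')).div_const 2) hpoint
  rwa [intervalIntegral.integral_const, intervalIntegral.integral_div,
    integral_add (hint.comp_combo hab.ne) (hint.symm.comp_combo hab.ne'),
    integral_comp_combo f hab.ne, integral_comp_combo_swap f hab.ne, add_self_div_two, sub_zero,
    one_smul] at hmono

theorem hermiteHadamard_right (hf : IsSConvexOn s (Icc a b) f) (hs : -1 < s) (hab : a < b)
    (hint : IntervalIntegrable f volume a b) :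
    (b - a)⁻¹ * ∫ x in a..b, f x ≤ (f a + f b) / (s + 1) := by
  have hpow : IntervalIntegrable (fun t : ℝ => t ^ s) volume 0 1 := intervalIntegrable_rpow' hs
  have hpow' : IntervalIntegrable (fun t : ℝ => (1 - t) ^ s) volume 0 1 := by
    simpa using (hpow.comp_sub_left 1).symm
  have hmono : ∫ t in (0 : ℝ)..1, f (t * a + (1 - t) * b) ≤
      ∫ t in (0 : ℝ)..1, (t ^ s * f a + (1 - t) ^ s * f b) :=
    integral_mono_on zero_le_one (hint.comp_combo hab.ne)
      ((hpow.mul_const _).add (hpow'.mul_const _))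
      fun t ht => hf a (left_mem_Icc.mpr hab.le) b (right_mem_Icc.mpr hab.le) t ht
  rw [integral_comp_combo f hab.ne, integral_add (hpow.mul_const _) (hpow'.mul_const _),
    intervalIntegral.integral_mul_const, intervalIntegral.integral_mul_const,
    integral_rpow_zero_one hs, integral_one_sub_rpow_zero_one hs, ← mul_add] at hmono
  exact hmono.trans_eq (inv_mul_eq_div _ _)

end IsSConvexOn

theorem stmt0 (f : ℝ → ℝ) (s a b : ℝ) (hs : s ∈ Set.Ioc (0:ℝ) 1)
    (hconv : ∀ x ∈ Set.Ici (0:ℝ), ∀ y ∈ Set.Ici (0:ℝ), ∀ t ∈ Set.Icc (0:ℝ) 1,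
      f (t * x + (1 - t) * y) ≤ t ^ s * f x + (1 - t) ^ s * f y)
    (ha : 0 ≤ a) (hab : a < b) (hint : IntervalIntegrable f volume a b) :
    (2:ℝ) ^ (s - 1) * f ((a + b) / 2) ≤ (1 / (b - a)) * ∫ x in a..b, f x ∧
      (1 / (b - a)) * ∫ x in a..b, f x ≤ (f a + f b) / (s + 1) := by
  have hf : IsSConvexOn s (Icc a b) f :=
    IsSConvexOn.mono (E := Ici 0) hconv fun x hx => ha.trans hx.1
  rw [one_div]
  exact ⟨hf.hermiteHadamard_left hab hint, hf.hermiteHadamard_right (by linarith [hs.1]) hab hint⟩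
end

section
/- Let f : I ⊆ ℝ → ℝ be n-times differentiable on the interior of I with f^(n) ∈ L¹[a,b], where a,b ∈ I°, a < b. Then for every t ∈ [a,b]: (-1)^n ∫_a^b f(x) dx = Σ_{m=1}^n (-1)^(n-m+1) [((t-a)^m - (t-b)^m)/m!] f^(m-1)(t) + (1/n!)[∫_a^t (x-a)^n f^(n)(x) dx + ∫_t^b (x-b)^n f^(n)(x) dx]. -/
/-!
Integrating by parts `n` times against the kernels `(x - c) ^ m / m!` expands `∫ x in c..t, f x`
into the values `f^(m-1)(t)` plus an integral remainder, for any anchor `c`. The identity is the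
expansion with `c = a` minus the one with `c = b`, since `∫ a..b = ∫ a..t - ∫ b..t`.
-/

open MeasureTheory intervalIntegral Finset

section
variable {f : ℝ → ℝ} {c t : ℝ}

theorem intervalIntegrable_of_forall_differentiableAt {g : ℝ → ℝ}
    (hg : ∀ x ∈ Set.uIcc c t, DifferentiableAt ℝ g x) : IntervalIntegrable g volume c t :=
  ContinuousOn.intervalIntegrable fun x hx => (hg x hx).continuousAt.continuousWithinAt

theorem intervalIntegrable_of_iteratedDeriv (n : ℕ)
    (hd : ∀ k < n, ∀ x ∈ Set.uIcc c t, DifferentiableAt ℝ (iteratedDeriv k f) x)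
    (hi : IntervalIntegrable (iteratedDeriv n f) volume c t) : IntervalIntegrable f volume c t := by
  cases n with
  | zero => simpa using hi
  | succ n => simpa using intervalIntegrable_of_forall_differentiableAt (hd 0 n.succ_pos)

theorem integral_sub_pow_succ_mul_iteratedDeriv_succ (n : ℕ)
    (hd : ∀ x ∈ Set.uIcc c t, DifferentiableAt ℝ (iteratedDeriv n f) x)
    (hi : IntervalIntegrable (iteratedDeriv (n + 1) f) volume c t) :
    ∫ x in c..t, (x - c) ^ (n + 1) * iteratedDeriv (n + 1) f x =
      (t - c) ^ (n + 1) * iteratedDeriv n f t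
        - (n + 1) * ∫ x in c..t, (x - c) ^ n * iteratedDeriv n f x := by
  have hu : ∀ x ∈ Set.uIcc c t,
      HasDerivAt (fun y => (y - c) ^ (n + 1)) ((n + 1) * (x - c) ^ n) x := fun x _ => by
    simpa using ((hasDerivAt_id x).sub_const c).fun_pow (n + 1)
  have hv : ∀ x ∈ Set.uIcc c t, HasDerivAt (iteratedDeriv n f) (iteratedDeriv (n + 1) f x) x :=
    fun x hx => iteratedDeriv_succ (f := f) ▸ (hd x hx).hasDerivAt
  have hu' : IntervalIntegrable (fun x => (n + 1) * (x - c) ^ n) volume c t :=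
    (by fun_prop : Continuous _).intervalIntegrable _ _
  rw [integral_mul_deriv_eq_deriv_mul hu hv hu' hi,
    ← intervalIntegral.integral_const_mul]
  simp only [sub_self, zero_pow n.succ_ne_zero, zero_mul, sub_zero, mul_assoc]

theorem neg_one_pow_mul_integral_eq_sum_add_integral_remainder (n : ℕ)
    (hd : ∀ k < n, ∀ x ∈ Set.uIcc c t, DifferentiableAt ℝ (iteratedDeriv k f) x)
    (hi : IntervalIntegrable (iteratedDeriv n f) volume c t) :
    (-1 : ℝ) ^ n * ∫ x in c..t, f x =
      (∑ m ∈ Icc 1 n, (-1 : ℝ) ^ (n - m + 1) * ((t - c) ^ m / (m.factorial : ℝ))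
        * iteratedDeriv (m - 1) f t)
      + (1 / (n.factorial : ℝ)) * ∫ x in c..t, (x - c) ^ n * iteratedDeriv n f x := by
  induction n with
  | zero => simp
  | succ n ih =>
    have hdn : ∀ x ∈ Set.uIcc c t, DifferentiableAt ℝ (iteratedDeriv n f) x :=
      hd n n.lt_succ_self
    have hin : IntervalIntegrable (iteratedDeriv n f) volume c t :=
      intervalIntegrable_of_forall_differentiableAt hdn
    have hsign :
        ∑ m ∈ Icc 1 n, (-1 : ℝ) ^ (n + 1 - m + 1) * ((t - c) ^ m / (m.factorial : ℝ))
          * iteratedDeriv (m - 1) f t =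
        -∑ m ∈ Icc 1 n, (-1 : ℝ) ^ (n - m + 1) * ((t - c) ^ m / (m.factorial : ℝ))
          * iteratedDeriv (m - 1) f t := by
      rw [← sum_neg_distrib]
      refine sum_congr rfl fun m hm => ?_
      rw [Nat.sub_add_comm (mem_Icc.1 hm).2, pow_succ]
      ring
    rw [sum_Icc_succ_top (by omega), hsign, integral_sub_pow_succ_mul_iteratedDeriv_succ n hdn hi,
      Nat.factorial_succ, pow_succ, mul_right_comm,
      ih (fun k hk => hd k (hk.trans n.lt_succ_self)) hin]
    simp only [Nat.add_sub_cancel, Nat.sub_self, Nat.cast_mul, Nat.cast_succ]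
    field_simp
    ring

end

theorem stmt1_general (I : Set ℝ) (f : ℝ → ℝ) (n : ℕ) (a b t : ℝ)
    (hsub : Set.Icc a b ⊆ interior I)
    (hdiff : ∀ k < n, DifferentiableOn ℝ (iteratedDeriv k f) (interior I))
    (hint : IntervalIntegrable (iteratedDeriv n f) volume a b)
    (ht : t ∈ Set.Icc a b) :
    (-1:ℝ) ^ n * ∫ x in a..b, f x =
      (∑ m ∈ Finset.Icc 1 n, (-1:ℝ) ^ (n - m + 1) *
        (((t - a) ^ m - (t - b) ^ m) / (m.factorial : ℝ)) * iteratedDeriv (m - 1) f t)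
      + (1 / (n.factorial : ℝ)) *
        ((∫ x in a..t, (x - a) ^ n * iteratedDeriv n f x)
          + ∫ x in t..b, (x - b) ^ n * iteratedDeriv n f x) := by
  rw [← Set.uIcc_of_le (ht.1.trans ht.2)] at hsub ht
  have hd : ∀ k < n, ∀ x ∈ Set.uIcc a b, DifferentiableAt ℝ (iteratedDeriv k f) x :=
    fun k hk x hx => (hdiff k hk).differentiableAt (isOpen_interior.mem_nhds (hsub hx))
  have hsub_ct : ∀ c ∈ Set.uIcc a b, Set.uIcc c t ⊆ Set.uIcc a b :=
    fun c hc => Set.uIcc_subset_uIcc hc ht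
  have taylor : ∀ c ∈ Set.uIcc a b, _ := fun c hc =>
    neg_one_pow_mul_integral_eq_sum_add_integral_remainder n
      (fun k hk x hx => hd k hk x (hsub_ct c hc hx)) (hint.mono_set (hsub_ct c hc))
  have hf := intervalIntegrable_of_iteratedDeriv n hd hint
  rw [← integral_add_adjacent_intervals (hf.mono_set (hsub_ct a Set.left_mem_uIcc))
      (hf.mono_set (Set.uIcc_comm t b ▸ hsub_ct b Set.right_mem_uIcc)),
    integral_symm b t, integral_symm b t]
  simp only [sub_div, mul_sub, sub_mul, sum_sub_distrib]
  linear_combination taylor a Set.left_mem_uIcc - taylor b Set.right_mem_uIcc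

theorem stmt1 (I : Set ℝ) (f : ℝ → ℝ) (n : ℕ) (a b t : ℝ)
    (hab : a < b) (hsub : Set.Icc a b ⊆ interior I)
    (hdiff : ∀ k < n, DifferentiableOn ℝ (iteratedDeriv k f) (interior I))
    (hint : IntervalIntegrable (iteratedDeriv n f) volume a b)
    (ht : t ∈ Set.Icc a b) :
    (-1:ℝ) ^ n * ∫ x in a..b, f x =
      (∑ m ∈ Finset.Icc 1 n, (-1:ℝ) ^ (n - m + 1) *
        (((t - a) ^ m - (t - b) ^ m) / (m.factorial : ℝ)) * iteratedDeriv (m - 1) f t)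
      + (1 / (n.factorial : ℝ)) *
        ((∫ x in a..t, (x - a) ^ n * iteratedDeriv n f x)
          + ∫ x in t..b, (x - b) ^ n * iteratedDeriv n f x) :=
  stmt1_general I f n a b t hsub hdiff hint ht
end

section
/- Let f : I ⊆ ℝ → ℝ be differentiable on I° with f' ∈ L¹[a,b], a < b. Then f((a+b)/2) − (1/(b-a)) ∫_a^b f(x) dx = ((b-a)/4) ∫_0^1 (1-t) [f'(t·a + (1-t)·(a+b)/2) − f'(t·b + (1-t)·(a+b)/2)] dt. -/
open MeasureTheory intervalIntegral Finset

/-! The substitution `x = t c + (1 - t) m` turns `∫₀¹ (1 - t) f'(t c + (1 - t) m) dt` into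
`(c - m)⁻² ∫ₘᶜ (c - x) f'(x) dx`, and integration by parts evaluates the latter as
`(c - m)⁻² (∫ₘᶜ f - (c - m) f(m))`. Taking `m` the midpoint and subtracting the cases `c = b`
and `c = a`, the two boundary terms add up to `(b - a) f(m)` and the integrals to `∫ₐᵇ f`. -/

section Segment

variable {f f' g : ℝ → ℝ} {m c : ℝ}

theorem IntervalIntegrable.comp_segment (hg : IntervalIntegrable g volume m c) :
    IntervalIntegrable (fun t => g (t * c + (1 - t) * m)) volume 0 1 := by
  rcases eq_or_ne c m with rfl | hcm
  · simp only [← add_mul, add_sub_cancel, one_mul]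
    exact intervalIntegrable_const
  have h := (hg.comp_add_right m).comp_mul_left (c := c - m)
  simp only [sub_self, zero_div, div_self (sub_ne_zero.2 hcm)] at h
  convert h using 2 with t
  ring_nf

theorem integral_one_sub_mul_comp_segment (hmc : m ≠ c) (g : ℝ → ℝ) :
    ∫ t in (0:ℝ)..1, (1 - t) * g (t * c + (1 - t) * m) =
      ((c - m) ^ 2)⁻¹ * ∫ x in m..c, (c - x) * g x := by
  have hcm : c - m ≠ 0 := sub_ne_zero.2 hmc.symm
  have hpoint : ∀ t : ℝ, (1 - t) * g (t * c + (1 - t) * m) =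
      (c - m)⁻¹ * ((fun x => (c - x) * g x) ((c - m) * t + m)) := fun t => by
    field_simp
    ring_nf
  rw [intervalIntegral.integral_congr fun t _ => hpoint t, intervalIntegral.integral_const_mul,
    integral_comp_mul_add (fun x => (c - x) * g x) hcm, smul_eq_mul, mul_zero, zero_add, mul_one,
    sub_add_cancel, ← mul_assoc, sq, mul_inv]

theorem integral_sub_mul_deriv (hf : ∀ x ∈ Set.uIcc m c, HasDerivAt f (f' x) x)
    (hf' : IntervalIntegrable f' volume m c) :
    ∫ x in m..c, (c - x) * f' x = (∫ x in m..c, f x) - (c - m) * f m := by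
  have hu : ∀ x ∈ Set.uIcc m c, HasDerivAt (fun x => c - x) (-1) x := fun x _ => by
    simpa using (hasDerivAt_id x).const_sub c
  rw [integral_mul_deriv_eq_deriv_mul hu hf intervalIntegrable_const hf']
  simp only [sub_self, zero_mul, neg_one_mul, intervalIntegral.integral_neg]
  ring

theorem sq_mul_integral_one_sub_mul_deriv_segment
    (hf : ∀ x ∈ Set.uIcc m c, HasDerivAt f (f' x) x)
    (hf' : IntervalIntegrable f' volume m c) :
    (c - m) ^ 2 * ∫ t in (0:ℝ)..1, (1 - t) * f' (t * c + (1 - t) * m) =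
      (∫ x in m..c, f x) - (c - m) * f m := by
  rcases eq_or_ne m c with rfl | hmc
  · simp
  rw [integral_one_sub_mul_comp_segment hmc, integral_sub_mul_deriv hf hf',
    mul_inv_cancel_left₀ (pow_ne_zero 2 (sub_ne_zero.2 hmc.symm))]

end Segment

theorem stmt2 (I : Set ℝ) (f : ℝ → ℝ) (a b : ℝ)
    (hab : a < b) (hsub : Set.Icc a b ⊆ interior I)
    (hdiff : DifferentiableOn ℝ f (interior I))
    (hint : IntervalIntegrable (deriv f) volume a b) :
    f ((a + b) / 2) - (1 / (b - a)) * ∫ x in a..b, f x =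
      ((b - a) / 4) * ∫ t in (0:ℝ)..1, (1 - t) *
        (deriv f (t * a + (1 - t) * ((a + b) / 2)) -
         deriv f (t * b + (1 - t) * ((a + b) / 2))) := by
  set m := (a + b) / 2 with hm
  have hderiv : ∀ x ∈ Set.uIcc a b, HasDerivAt f (deriv f x) x := fun x hx =>
    (hdiff.differentiableAt (isOpen_interior.mem_nhds
      (hsub (Set.uIcc_of_le hab.le ▸ hx)))).hasDerivAt
  have hmI : m ∈ Set.uIcc a b := Set.uIcc_of_le hab.le ▸ ⟨by linarith, by linarith⟩
  have hma : Set.uIcc m a ⊆ Set.uIcc a b := Set.uIcc_subset_uIcc hmI Set.left_mem_uIcc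
  have hmb : Set.uIcc m b ⊆ Set.uIcc a b := Set.uIcc_subset_uIcc hmI Set.right_mem_uIcc
  have hA := sq_mul_integral_one_sub_mul_deriv_segment (fun x hx => hderiv x (hma hx))
    (hint.mono_set hma)
  have hB := sq_mul_integral_one_sub_mul_deriv_segment (fun x hx => hderiv x (hmb hx))
    (hint.mono_set hmb)
  have hfint : IntervalIntegrable f volume a b :=
    ContinuousOn.intervalIntegrable fun x hx => (hderiv x hx).continuousAt.continuousWithinAt
  simp_rw [mul_sub]
  rw [integral_sub ((hint.mono_set hma).comp_segment.continuousOn_mul (by fun_prop))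
      ((hint.mono_set hmb).comp_segment.continuousOn_mul (by fun_prop)),
    ← integral_interval_sub_left (hfint.mono_set hmb) (hfint.mono_set hma)]
  generalize (∫ t in (0:ℝ)..1, (1 - t) * deriv f (t * a + (1 - t) * m)) = IA at hA ⊢
  generalize (∫ t in (0:ℝ)..1, (1 - t) * deriv f (t * b + (1 - t) * m)) = IB at hB ⊢
  have hba : b - a ≠ 0 := sub_ne_zero.2 hab.ne'
  rw [hm] at hA hB ⊢
  field_simp
  linear_combination 4 * (hB - hA)
end

section
/- Let f : I ⊆ ℝ → ℝ be twice differentiable on I° with f'' ∈ L¹[a,b], a < b. Then (f(a)+f(b))/2 − (1/(b-a)) ∫_a^b f(x) dx = ((b-a)/4)[f'(b) − f'(a)] − (1/(4(b-a))) ∫_a^b [(x-a)² + (x-b)²] f''(x) dx. -/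
/-! Integrate `∫ p f''` by parts twice against `p x = (x - a)² + (x - b)²`. Since
`p a = p b = (b - a)²`, `p' b = -p' a = 2 (b - a)` and `p'' = 4`, the boundary terms are
`(b - a)² (f' b - f' a)` and `2 (b - a) (f a + f b)`, and the remaining integral is `4 ∫ f`. -/

open MeasureTheory intervalIntegral Finset

theorem hasDerivAt_iteratedDeriv_of_differentiableOn {𝕜 F : Type*} [NontriviallyNormedField 𝕜]
    [NormedAddCommGroup F] [NormedSpace 𝕜 F] {f : 𝕜 → F} {s : Set 𝕜} {k : ℕ} {x : 𝕜}
    (hs : IsOpen s) (h : DifferentiableOn 𝕜 (iteratedDeriv k f) s) (hx : x ∈ s) :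
    HasDerivAt (iteratedDeriv k f) (iteratedDeriv (k + 1) f x) x := by
  rw [iteratedDeriv_succ]
  exact (h.differentiableAt (hs.mem_nhds hx)).hasDerivAt

theorem intervalIntegral.integral_mul_deriv_deriv_eq {u u' u'' f f' f'' : ℝ → ℝ} {a b : ℝ}
    (hu : ∀ x ∈ Set.uIcc a b, HasDerivAt u (u' x) x)
    (hu' : ∀ x ∈ Set.uIcc a b, HasDerivAt u' (u'' x) x)
    (hf : ∀ x ∈ Set.uIcc a b, HasDerivAt f (f' x) x)
    (hf' : ∀ x ∈ Set.uIcc a b, HasDerivAt f' (f'' x) x)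
    (hu'' : IntervalIntegrable u'' volume a b) (hf'' : IntervalIntegrable f'' volume a b) :
    ∫ x in a..b, u x * f'' x =
      u b * f' b - u a * f' a - (u' b * f b - u' a * f a) + ∫ x in a..b, u'' x * f x := by
  have hu'_int : IntervalIntegrable u' volume a b :=
    ContinuousOn.intervalIntegrable fun x hx => (hu' x hx).continuousAt.continuousWithinAt
  have hf'_int : IntervalIntegrable f' volume a b :=
    ContinuousOn.intervalIntegrable fun x hx => (hf' x hx).continuousAt.continuousWithinAt
  rw [integral_mul_deriv_eq_deriv_mul hu hf' hu'_int hf'',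
    integral_mul_deriv_eq_deriv_mul hu' hf hu'' hf'_int]
  ring

theorem stmt4 (I : Set ℝ) (f : ℝ → ℝ) (a b : ℝ)
    (hab : a < b) (hsub : Set.Icc a b ⊆ interior I)
    (hdiff : ∀ k < 2, DifferentiableOn ℝ (iteratedDeriv k f) (interior I))
    (hint : IntervalIntegrable (iteratedDeriv 2 f) volume a b) :
    (f a + f b) / 2 - (1 / (b - a)) * ∫ x in a..b, f x =
      ((b - a) / 4) * (deriv f b - deriv f a)
      - (1 / (4 * (b - a))) * ∫ x in a..b, ((x - a) ^ 2 + (x - b) ^ 2) *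
          iteratedDeriv 2 f x := by
  have hmem : ∀ x ∈ Set.uIcc a b, x ∈ interior I := by
    rw [Set.uIcc_of_le hab.le]
    exact fun x hx => hsub hx
  have hf : ∀ x ∈ Set.uIcc a b, HasDerivAt f (deriv f x) x := fun x hx => by
    simpa using hasDerivAt_iteratedDeriv_of_differentiableOn isOpen_interior
      (hdiff 0 two_pos) (hmem x hx)
  have hf' : ∀ x ∈ Set.uIcc a b, HasDerivAt (deriv f) (iteratedDeriv 2 f x) x := fun x hx => by
    simpa using hasDerivAt_iteratedDeriv_of_differentiableOn isOpen_interior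
      (hdiff 1 one_lt_two) (hmem x hx)
  have hp : ∀ x, HasDerivAt (fun x => (x - a) ^ 2 + (x - b) ^ 2) (2 * (x - a) + 2 * (x - b)) x :=
    fun x => ((((hasDerivAt_id' x).sub_const a).pow 2).add
      (((hasDerivAt_id' x).sub_const b).pow 2)).congr_deriv (by ring)
  have hp' : ∀ x, HasDerivAt (fun x => 2 * (x - a) + 2 * (x - b)) 4 x :=
    fun x => ((((hasDerivAt_id' x).sub_const a).const_mul 2).add
      (((hasDerivAt_id' x).sub_const b).const_mul 2)).congr_deriv (by ring)
  rw [integral_mul_deriv_deriv_eq (fun x _ => hp x) (fun x _ => hp' x) hf hf'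
    intervalIntegrable_const hint, intervalIntegral.integral_const_mul]
  have hba : b - a ≠ 0 := sub_ne_zero.mpr hab.ne'
  field_simp
  ring
end

section
/- Let f : I ⊂ [0,∞) → ℝ be n-times differentiable on I° with f^(n) ∈ L¹[a,b], a < b, and suppose |f^(n)| is s-convex on [a,b] for some s ∈ (0,1]. Then for every λ ∈ [a,b]: |(-1)^n ∫_a^b f(x) dx + Σ_{m=1}^n (-1)^(n-m+2) [((λ-a)^m − (λ-b)^m)/m!] f^(m-1)(λ)| ≤ (1/n!)[B(s+1, n+1)((λ-a)^(n+1)|f^(n)(a)| + (b-λ)^(n+1)|f^(n)(b)|) + B(1, n+s+1)((λ-a)^(n+1) + (b-λ)^(n+1))|f^(n)(λ)|], where B denotes the Euler Beta function. -/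
open MeasureTheory intervalIntegral Finset

def sConvexOn (s : ℝ) (A : Set ℝ) (g : ℝ → ℝ) : Prop :=
  ∀ x ∈ A, ∀ y ∈ A, ∀ t ∈ Set.Icc (0:ℝ) 1,
    g (t * x + (1 - t) * y) ≤ t ^ s * g x + (1 - t) ^ s * g y

noncomputable def betaF (x y : ℝ) : ℝ :=
  ∫ t in (0:ℝ)..1, t ^ (x - 1) * (1 - t) ^ (y - 1)

/-!
Repeated integration by parts gives the Montgomery-type identity
`n! · (LHS) = ∫_a^λ (x - a)^n f⁽ⁿ⁾(x) dx + ∫_λ^b (x - b)^n f⁽ⁿ⁾(x) dx`.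
On `[c, d]`, s-convexity bounds `|f⁽ⁿ⁾(x)|` by
`((d - x)/(d - c))^s |f⁽ⁿ⁾(c)| + ((x - c)/(d - c))^s |f⁽ⁿ⁾(d)|`,
and rescaling `[c, d]` to `[0, 1]` turns the two weighted integrals into `B(s + 1, n + 1)`
and `B(1, n + s + 1)`. The piece on `[λ, b]` reduces to the one on `[a, λ]` by the
reflection `x ↦ λ + b - x`.
-/

lemma betaF_comm (x y : ℝ) : betaF x y = betaF y x := by
  have h := integral_comp_sub_left (a := 0) (b := 1)
    (fun t : ℝ => t ^ (x - 1) * (1 - t) ^ (y - 1)) 1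
  simp only [sub_sub_cancel, sub_zero, sub_self] at h
  rw [betaF, betaF, ← h]
  exact integral_congr fun t _ => mul_comm _ _

lemma betaF_eq_integral_pow_mul_rpow (n : ℕ) (s : ℝ) :
    betaF (s + 1) (n + 1) = ∫ u in (0:ℝ)..1, u ^ n * (1 - u) ^ s := by
  rw [betaF_comm, betaF]
  simp only [add_sub_cancel_right, Real.rpow_natCast]

lemma betaF_one_eq_integral_pow_mul_rpow (n : ℕ) {s : ℝ} (hs : 0 < s) :
    betaF 1 (n + s + 1) = ∫ u in (0:ℝ)..1, u ^ n * u ^ s := by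
  rw [betaF_comm, betaF]
  refine integral_congr fun u hu => ?_
  rw [Set.uIcc_of_le zero_le_one] at hu
  simp only [add_sub_cancel_right, sub_self, Real.rpow_zero, mul_one]
  rw [Real.rpow_add' hu.1 (by positivity), Real.rpow_natCast]

lemma integral_comp_sub_div_sub {c d : ℝ} (hcd : c ≠ d) (φ : ℝ → ℝ) :
    ∫ x in c..d, φ ((x - c) / (d - c)) = (d - c) * ∫ u in (0:ℝ)..1, φ u := by
  have hdc : d - c ≠ 0 := sub_ne_zero.2 hcd.symm
  have h := integral_comp_div_sub (a := c) (b := d) φ hdc (c / (d - c))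
  simp only [sub_self, div_sub_div_same, div_self hdc, smul_eq_mul] at h
  rw [← h]

section sConvexOn

variable {s : ℝ} {A : Set ℝ} {g : ℝ → ℝ}

lemma sConvexOn.mono (hg : sConvexOn s A g) {B : Set ℝ} (hBA : B ⊆ A) : sConvexOn s B g :=
  fun x hx y hy t ht => hg x (hBA hx) y (hBA hy) t ht

lemma sConvexOn.comp_sub_left (hg : sConvexOn s A g) (e : ℝ) :
    sConvexOn s ((e - ·) ⁻¹' A) (fun x => g (e - x)) := by
  intro x hx y hy t ht
  convert hg (e - x) hx (e - y) hy t ht using 2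
  ring

lemma sConvexOn.le_of_mem_Icc {c d : ℝ} (hg : sConvexOn s (Set.Icc c d) g) (hcd : c < d)
    {x : ℝ} (hx : x ∈ Set.Icc c d) :
    g x ≤ ((d - x) / (d - c)) ^ s * g c + ((x - c) / (d - c)) ^ s * g d := by
  have hdc : 0 < d - c := sub_pos.2 hcd
  have ht : (d - x) / (d - c) ∈ Set.Icc (0:ℝ) 1 :=
    ⟨div_nonneg (by linarith [hx.2]) hdc.le, (div_le_one hdc).2 (by linarith [hx.1])⟩
  have h := hg c ⟨le_rfl, hcd.le⟩ d ⟨hcd.le, le_rfl⟩ _ ht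
  have hx' : (d - x) / (d - c) * c + (1 - (d - x) / (d - c)) * d = x := by
    field_simp; ring
  have h1 : 1 - (d - x) / (d - c) = (x - c) / (d - c) := by
    field_simp; ring
  rwa [hx', h1] at h

end sConvexOn

lemma integral_pow_mul_le_betaF {s : ℝ} (hs : 0 < s) (n : ℕ) {g : ℝ → ℝ} {c d : ℝ}
    (hcd : c ≤ d) (hgi : IntervalIntegrable g volume c d) (hg : sConvexOn s (Set.Icc c d) g) :
    ∫ x in c..d, (x - c) ^ n * g x
      ≤ (d - c) ^ (n + 1) * (betaF (s + 1) (n + 1) * g c + betaF 1 (n + s + 1) * g d) := by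
  rcases hcd.eq_or_lt with rfl | hlt
  · simp
  set φ : ℝ → ℝ := fun u => u ^ n * ((1 - u) ^ s * g c + u ^ s * g d)
  have hdc : d - c ≠ 0 := (sub_pos.2 hlt).ne'
  have hφ : Continuous φ := by fun_prop (disch := simp [hs.le])
  have hφ_int : ∫ u in (0:ℝ)..1, φ u
      = betaF (s + 1) (n + 1) * g c + betaF 1 (n + s + 1) * g d := by
    rw [betaF_eq_integral_pow_mul_rpow, betaF_one_eq_integral_pow_mul_rpow n hs,
      ← intervalIntegral.integral_mul_const, ← intervalIntegral.integral_mul_const,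
      ← intervalIntegral.integral_add]
    · exact integral_congr fun u _ => by simp only [φ]; ring
    all_goals exact Continuous.intervalIntegrable (by fun_prop (disch := simp [hs.le])) _ _
  calc ∫ x in c..d, (x - c) ^ n * g x
      ≤ ∫ x in c..d, (d - c) ^ n * φ ((x - c) / (d - c)) := by
        refine integral_mono_on hcd (hgi.continuousOn_mul (by fun_prop))
          (((hφ.comp (by fun_prop)).const_mul _).intervalIntegrable _ _) fun x hx => ?_
        have hx' : (d - c) ^ n * φ ((x - c) / (d - c))
            = (x - c) ^ n * (((d - x) / (d - c)) ^ s * g c + ((x - c) / (d - c)) ^ s * g d) := by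
          simp only [φ]
          rw [div_pow, one_sub_div hdc, sub_sub_sub_cancel_right]
          field_simp
        rw [hx']
        exact mul_le_mul_of_nonneg_left (hg.le_of_mem_Icc hlt hx) (pow_nonneg (sub_nonneg.2 hx.1) n)
    _ = (d - c) ^ (n + 1) * (betaF (s + 1) (n + 1) * g c + betaF 1 (n + s + 1) * g d) := by
        rw [intervalIntegral.integral_const_mul, integral_comp_sub_div_sub hlt.ne, hφ_int,
          pow_succ, mul_assoc]

lemma abs_integral_pow_mul_le_betaF {s : ℝ} (hs : 0 < s) (n : ℕ) {g : ℝ → ℝ} {c d : ℝ}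
    (hcd : c ≤ d) (hgi : IntervalIntegrable g volume c d)
    (hg : sConvexOn s (Set.Icc c d) (fun x => |g x|)) :
    |∫ x in c..d, (x - c) ^ n * g x|
      ≤ (d - c) ^ (n + 1) * (betaF (s + 1) (n + 1) * |g c| + betaF 1 (n + s + 1) * |g d|) := by
  refine (abs_integral_le_integral_abs hcd).trans (le_of_eq_of_le ?_
    (integral_pow_mul_le_betaF hs n hcd hgi.abs hg))
  refine integral_congr fun x hx => ?_
  rw [Set.uIcc_of_le hcd] at hx
  simp only [abs_mul, abs_pow, abs_of_nonneg (sub_nonneg.2 hx.1)]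

lemma abs_integral_pow_sub_right_mul_le_betaF {s : ℝ} (hs : 0 < s) (n : ℕ) {g : ℝ → ℝ}
    {c d : ℝ} (hcd : c ≤ d) (hgi : IntervalIntegrable g volume c d)
    (hg : sConvexOn s (Set.Icc c d) (fun x => |g x|)) :
    |∫ x in c..d, (x - d) ^ n * g x|
      ≤ (d - c) ^ (n + 1) * (betaF (s + 1) (n + 1) * |g d| + betaF 1 (n + s + 1) * |g c|) := by
  have hreflect : ∫ x in c..d, (x - d) ^ n * g x
      = (-1) ^ n * ∫ x in c..d, (x - c) ^ n * g (c + d - x) := by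
    have h := integral_comp_sub_left (a := c) (b := d) (fun y => (y - d) ^ n * g y) (c + d)
    rw [add_sub_cancel_right, add_sub_cancel_left] at h
    rw [← h, ← intervalIntegral.integral_const_mul]
    refine integral_congr fun x _ => ?_
    rw [show c + d - x - d = -1 * (x - c) by ring, mul_pow, mul_assoc]
  have hgi' : IntervalIntegrable (fun x => g (c + d - x)) volume c d := by
    simpa using (hgi.comp_sub_left (c + d)).symm
  have hg' : sConvexOn s (Set.Icc c d) (fun x => |g (c + d - x)|) :=
    (hg.comp_sub_left (c + d)).mono fun x hx => ⟨by linarith [hx.2], by linarith [hx.1]⟩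
  rw [hreflect, abs_mul, abs_pow, abs_neg, abs_one, one_pow, one_mul]
  simpa using abs_integral_pow_mul_le_betaF hs n hcd hgi' hg'

lemma integral_pow_succ_mul_deriv {F F' : ℝ → ℝ} {u v : ℝ} (e : ℝ) (n : ℕ)
    (hF : ∀ x ∈ Set.uIcc u v, HasDerivAt F (F' x) x) (hF' : IntervalIntegrable F' volume u v) :
    ∫ x in u..v, (x - e) ^ (n + 1) * F' x
      = (v - e) ^ (n + 1) * F v - (u - e) ^ (n + 1) * F u
        - (n + 1) * ∫ x in u..v, (x - e) ^ n * F x := by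
  have hpow : ∀ x, HasDerivAt (fun y => (y - e) ^ (n + 1)) ((n + 1) * (x - e) ^ n) x :=
    fun x => by
      simpa using ((hasDerivAt_id x).sub_const e).fun_pow (n + 1)
  rw [integral_mul_deriv_eq_deriv_mul (fun x _ => hpow x) hF
    ((by fun_prop : Continuous fun x : ℝ => (n + 1) * (x - e) ^ n).intervalIntegrable _ _) hF',
    ← intervalIntegral.integral_const_mul]
  simp only [mul_assoc]

lemma integral_pow_succ_mul_deriv_add {F F' : ℝ → ℝ} {a b l : ℝ} (n : ℕ)
    (hF : ∀ x ∈ Set.Icc a b, HasDerivAt F (F' x) x) (hF' : IntervalIntegrable F' volume a b)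
    (hl : l ∈ Set.Icc a b) :
    (∫ x in a..l, (x - a) ^ (n + 1) * F' x) + ∫ x in l..b, (x - b) ^ (n + 1) * F' x
      = ((l - a) ^ (n + 1) - (l - b) ^ (n + 1)) * F l
        - (n + 1) * ((∫ x in a..l, (x - a) ^ n * F x) + ∫ x in l..b, (x - b) ^ n * F x) := by
  have hal : Set.uIcc a l ⊆ Set.Icc a b := by
    rw [Set.uIcc_of_le hl.1]; exact Set.Icc_subset_Icc le_rfl hl.2
  have hlb : Set.uIcc l b ⊆ Set.Icc a b := by
    rw [Set.uIcc_of_le hl.2]; exact Set.Icc_subset_Icc hl.1 le_rfl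
  have hab : Set.uIcc a b = Set.Icc a b := Set.uIcc_of_le (hl.1.trans hl.2)
  rw [integral_pow_succ_mul_deriv a n (fun x hx => hF x (hal hx)) (hF'.mono_set (hab ▸ hal)),
    integral_pow_succ_mul_deriv b n (fun x hx => hF x (hlb hx)) (hF'.mono_set (hab ▸ hlb))]
  ring

lemma sum_Icc_succ_neg_one_pow_mul (c : ℕ → ℝ) (n : ℕ) :
    ∑ m ∈ Finset.Icc 1 (n + 1), (-1:ℝ) ^ (n + 1 - m) * c m
      = c (n + 1) - ∑ m ∈ Finset.Icc 1 n, (-1:ℝ) ^ (n - m) * c m := by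
  rw [Finset.sum_Icc_succ_top (by omega), Nat.sub_self, pow_zero, one_mul, sub_eq_neg_add,
    ← Finset.sum_neg_distrib]
  congr 1
  refine Finset.sum_congr rfl fun m hm => ?_
  have hm := (Finset.mem_Icc.1 hm).2
  rw [show n + 1 - m = n - m + 1 by omega, pow_succ]
  ring

theorem montgomery_identity {f : ℝ → ℝ} {U : Set ℝ} (hU : IsOpen U) {a b l : ℝ}
    (hl : l ∈ Set.Icc a b) (hsub : Set.Icc a b ⊆ U) (n : ℕ)
    (hdiff : ∀ k < n, DifferentiableOn ℝ (iteratedDeriv k f) U)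
    (hint : IntervalIntegrable (iteratedDeriv n f) volume a b) :
    (∫ x in a..l, (x - a) ^ n * iteratedDeriv n f x)
        + ∫ x in l..b, (x - b) ^ n * iteratedDeriv n f x
      = n.factorial * ((-1:ℝ) ^ n * (∫ x in a..b, f x)
          + ∑ m ∈ Finset.Icc 1 n, (-1:ℝ) ^ (n - m) *
              (((l - a) ^ m - (l - b) ^ m) / m.factorial * iteratedDeriv (m - 1) f l)) := by
  induction n with
  | zero =>
    simp only [iteratedDeriv_zero] at hint
    have hl' := Set.Icc_subset_uIcc hl
    simp [integral_add_adjacent_intervals (hint.mono_set (Set.uIcc_subset_uIcc_left hl'))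
      (hint.mono_set (Set.uIcc_subset_uIcc_right hl'))]
  | succ n ih =>
    have hdn : DifferentiableOn ℝ (iteratedDeriv n f) U := hdiff n n.lt_succ_self
    have hderiv :
        ∀ x ∈ Set.Icc a b, HasDerivAt (iteratedDeriv n f) (iteratedDeriv (n + 1) f x) x :=
      fun x hx => iteratedDeriv_succ (f := f) ▸
        ((hdn x (hsub hx)).differentiableAt (hU.mem_nhds (hsub hx))).hasDerivAt
    have hint_n : IntervalIntegrable (iteratedDeriv n f) volume a b :=
      (hdn.continuousOn.mono hsub).intervalIntegrable_of_Icc (hl.1.trans hl.2)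
    rw [integral_pow_succ_mul_deriv_add n hderiv hint hl,
      ih (fun k hk => hdiff k (hk.trans n.lt_succ_self)) hint_n, sum_Icc_succ_neg_one_pow_mul,
      Nat.factorial_succ, Nat.add_sub_cancel]
    push_cast
    field_simp
    ring

theorem stmt5_general (I : Set ℝ) (f : ℝ → ℝ) (n : ℕ) (a b : ℝ)
    (hsub : Set.Icc a b ⊆ interior I)
    (hdiff : ∀ k < n, DifferentiableOn ℝ (iteratedDeriv k f) (interior I))
    (hint : IntervalIntegrable (iteratedDeriv n f) volume a b)
    (s : ℝ) (hs : s ∈ Set.Ioc (0:ℝ) 1)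
    (hsc : sConvexOn s (Set.Icc a b) (fun x => |iteratedDeriv n f x|))
    (l : ℝ) (hl : l ∈ Set.Icc a b) :
    |(-1:ℝ) ^ n * (∫ x in a..b, f x) + ∑ m ∈ Finset.Icc 1 n, (-1:ℝ) ^ (n - m + 2) * (((l - a) ^ m - (l - b) ^ m) / (m.factorial : ℝ)) * iteratedDeriv (m - 1) f l| ≤
      (1 / (n.factorial : ℝ)) *
        (betaF (s + 1) (n + 1) * ((l - a) ^ (n + 1) * |iteratedDeriv n f a|
            + (b - l) ^ (n + 1) * |iteratedDeriv n f b|)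
         + betaF 1 (n + s + 1) * ((l - a) ^ (n + 1) + (b - l) ^ (n + 1)) *
            |iteratedDeriv n f l|) := by
  have hS : (-1:ℝ) ^ n * (∫ x in a..b, f x) + ∑ m ∈ Finset.Icc 1 n, (-1:ℝ) ^ (n - m + 2) *
        (((l - a) ^ m - (l - b) ^ m) / (m.factorial : ℝ)) * iteratedDeriv (m - 1) f l
      = (n.factorial : ℝ)⁻¹ * ((∫ x in a..l, (x - a) ^ n * iteratedDeriv n f x)
          + ∫ x in l..b, (x - b) ^ n * iteratedDeriv n f x) := by
    rw [montgomery_identity isOpen_interior hl hsub n hdiff hint,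
      inv_mul_cancel_left₀ (by positivity)]
    simp only [pow_add, neg_one_sq, mul_one, mul_assoc]
  have hl' := Set.Icc_subset_uIcc hl
  have hal : Set.Icc a l ⊆ Set.Icc a b := Set.Icc_subset_Icc le_rfl hl.2
  have hlb : Set.Icc l b ⊆ Set.Icc a b := Set.Icc_subset_Icc hl.1 le_rfl
  rw [hS, one_div, abs_mul, abs_inv, Nat.abs_cast]
  gcongr
  calc _ ≤ |∫ x in a..l, (x - a) ^ n * iteratedDeriv n f x|
        + |∫ x in l..b, (x - b) ^ n * iteratedDeriv n f x| := abs_add_le _ _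
    _ ≤ (l - a) ^ (n + 1) * (betaF (s + 1) (n + 1) * |iteratedDeriv n f a|
          + betaF 1 (n + s + 1) * |iteratedDeriv n f l|)
        + (b - l) ^ (n + 1) * (betaF (s + 1) (n + 1) * |iteratedDeriv n f b|
          + betaF 1 (n + s + 1) * |iteratedDeriv n f l|) := add_le_add
        (abs_integral_pow_mul_le_betaF hs.1 n hl.1
          (hint.mono_set (Set.uIcc_subset_uIcc_left hl')) (hsc.mono hal))
        (abs_integral_pow_sub_right_mul_le_betaF hs.1 n hl.2
          (hint.mono_set (Set.uIcc_subset_uIcc_right hl')) (hsc.mono hlb))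
    _ = _ := by ring

theorem stmt5 (I : Set ℝ) (f : ℝ → ℝ) (n : ℕ) (a b : ℝ)
    (hI : I ⊆ Set.Ici (0:ℝ)) (hab : a < b) (hsub : Set.Icc a b ⊆ interior I)
    (hdiff : ∀ k < n, DifferentiableOn ℝ (iteratedDeriv k f) (interior I))
    (hint : IntervalIntegrable (iteratedDeriv n f) volume a b)
    (s : ℝ) (hs : s ∈ Set.Ioc (0:ℝ) 1)
    (hsc : sConvexOn s (Set.Icc a b) (fun x => |iteratedDeriv n f x|))
    (l : ℝ) (hl : l ∈ Set.Icc a b) :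
    |(-1:ℝ) ^ n * (∫ x in a..b, f x) + ∑ m ∈ Finset.Icc 1 n, (-1:ℝ) ^ (n - m + 2) * (((l - a) ^ m - (l - b) ^ m) / (m.factorial : ℝ)) * iteratedDeriv (m - 1) f l| ≤
      (1 / (n.factorial : ℝ)) *
        (betaF (s + 1) (n + 1) * ((l - a) ^ (n + 1) * |iteratedDeriv n f a|
            + (b - l) ^ (n + 1) * |iteratedDeriv n f b|)
         + betaF 1 (n + s + 1) * ((l - a) ^ (n + 1) + (b - l) ^ (n + 1)) *
            |iteratedDeriv n f l|) :=
  stmt5_general I f n a b hsub hdiff hint s hs hsc l hl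
end

section
/- Let f : I ⊂ [0,∞) → ℝ be n-times differentiable on I° with f^(n) ∈ L¹[a,b], a < b, and suppose |f^(n)|^q is s-convex on [a,b] for some s ∈ (0,1] and q > 1, with p = q/(q-1). Then for every λ ∈ [a,b]: |(-1)^n ∫_a^b f(x) dx + Σ_{m=1}^n (-1)^(n-m+2) [((λ-a)^m − (λ-b)^m)/m!] f^(m-1)(λ)| ≤ ((n+1)^(-1/p)/n!)[(λ-a)^(n+1){B(s+1,n+1)|f^(n)(a)|^q + B(1,n+s+1)|f^(n)(λ)|^q}^(1/q) + (b-λ)^(n+1){B(s+1,n+1)|f^(n)(b)|^q + B(1,n+s+1)|f^(n)(λ)|^q}^(1/q)]. -/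
open MeasureTheory intervalIntegral Finset

/-!
Integrating by parts `n` times around `l`, on `[l, a]` and on `[l, b]`, turns the left-hand side
into `|R b - R a| / n!` with `R c = ∫ t in l..c, (c - t) ^ n * f⁽ⁿ⁾ t`. The substitution
`t = u * c + (1 - u) * l` gives `R c = (c - l) ^ (n + 1) * ∫ u in 0..1, (1 - u) ^ n * f⁽ⁿ⁾ (…)`.
Hölder's inequality for the weight `(1 - u) ^ n` bounds this integral by
`(∫ (1 - u) ^ n) ^ (1 / p) = (n + 1) ^ (-1 / p)` times `(∫ (1 - u) ^ n * |f⁽ⁿ⁾ (…)| ^ q) ^ (1 / q)`,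
and `s`-convexity bounds the last integrand by
`(1 - u) ^ n * (u ^ s * |f⁽ⁿ⁾ c| ^ q + (1 - u) ^ s * |f⁽ⁿ⁾ l| ^ q)`, whose integral is the Beta
combination.
-/

theorem integral_sub_pow_mul_eq_of_hasDerivAt {F F' : ℝ → ℝ} {l c : ℝ}
    (hF : ∀ t ∈ Set.uIcc l c, HasDerivAt F (F' t) t) (hF' : IntervalIntegrable F' volume l c)
    (n : ℕ) :
    ((n : ℝ) + 1) * ∫ t in l..c, (c - t) ^ n * F t
      = (c - l) ^ (n + 1) * F l + ∫ t in l..c, (c - t) ^ (n + 1) * F' t := by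
  have hpow : ∀ t ∈ Set.uIcc l c,
      HasDerivAt (fun t => (c - t) ^ (n + 1)) (-(((n : ℝ) + 1) * (c - t) ^ n)) t := by
    intro t _
    simpa [mul_comm] using ((hasDerivAt_id t).const_sub c).fun_pow (n + 1)
  have hpow' : IntervalIntegrable (fun t => -(((n : ℝ) + 1) * (c - t) ^ n)) volume l c :=
    (by fun_prop : Continuous fun t : ℝ => -(((n : ℝ) + 1) * (c - t) ^ n)).intervalIntegrable l c
  rw [integral_mul_deriv_eq_deriv_mul hpow hF hpow' hF']
  simp only [neg_mul, mul_assoc, intervalIntegral.integral_neg, intervalIntegral.integral_const_mul]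
  ring

open Nat in
theorem integral_eq_sum_add_integral_sub_pow_mul_iteratedDeriv {f : ℝ → ℝ} {U : Set ℝ}
    (hU : IsOpen U) {l c : ℝ} (hlc : Set.uIcc l c ⊆ U) (n : ℕ)
    (hdiff : ∀ k < n, DifferentiableOn ℝ (iteratedDeriv k f) U)
    (hint : IntervalIntegrable (iteratedDeriv n f) volume l c) :
    ∫ t in l..c, f t = ∑ m ∈ Icc 1 n, (c - l) ^ m / m ! * iteratedDeriv (m - 1) f l
      + (∫ t in l..c, (c - t) ^ n * iteratedDeriv n f t) / n ! := by
  induction n with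
  | zero => simp
  | succ n ih =>
    have hderiv : ∀ t ∈ Set.uIcc l c,
        HasDerivAt (iteratedDeriv n f) (iteratedDeriv (n + 1) f t) t := fun t ht => by
      rw [iteratedDeriv_succ]
      exact ((hdiff n n.lt_succ_self).differentiableAt (hU.mem_nhds (hlc ht))).hasDerivAt
    have hint_n : IntervalIntegrable (iteratedDeriv n f) volume l c :=
      ((hdiff n n.lt_succ_self).continuousOn.mono hlc).intervalIntegrable
    have hparts := integral_sub_pow_mul_eq_of_hasDerivAt hderiv hint n
    rw [ih (fun k hk => hdiff k (hk.trans n.lt_succ_self)) hint_n,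
      sum_Icc_succ_top (by omega), Nat.add_sub_cancel, Nat.factorial_succ, Nat.cast_mul]
    field_simp
    push_cast
    linear_combination hparts

theorem intervalIntegrable_of_iteratedDeriv_s6 {f : ℝ → ℝ} {U : Set ℝ} {a b : ℝ} {n : ℕ}
    (hab : Set.uIcc a b ⊆ U) (hdiff : ∀ k < n, DifferentiableOn ℝ (iteratedDeriv k f) U)
    (hint : IntervalIntegrable (iteratedDeriv n f) volume a b) :
    IntervalIntegrable f volume a b := by
  cases n with
  | zero => simpa using hint
  | succ n => simpa using ((hdiff 0 n.succ_pos).continuousOn.mono hab).intervalIntegrable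

theorem neg_one_pow_sub_add_two_mul_pow {m n : ℕ} (hm : m ≤ n) (x : ℝ) :
    (-1 : ℝ) ^ (n - m + 2) * x ^ m = (-1) ^ n * (-x) ^ m := by
  obtain ⟨k, rfl⟩ := Nat.exists_eq_add_of_le hm
  rw [Nat.add_sub_cancel_left, neg_pow x, ← mul_assoc, ← pow_add,
    show m + k + m = k + 2 * m by ring, pow_add, pow_add, pow_mul]
  norm_num

open Nat in
theorem neg_one_pow_mul_integral_add_sum_eq {f : ℝ → ℝ} {U : Set ℝ} (hU : IsOpen U) {a b l : ℝ}
    (hl : l ∈ Set.Icc a b) (hsub : Set.Icc a b ⊆ U) {n : ℕ}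
    (hdiff : ∀ k < n, DifferentiableOn ℝ (iteratedDeriv k f) U)
    (hint : IntervalIntegrable (iteratedDeriv n f) volume a b) :
    (-1 : ℝ) ^ n * (∫ x in a..b, f x) + ∑ m ∈ Icc 1 n,
        (-1 : ℝ) ^ (n - m + 2) * (((l - a) ^ m - (l - b) ^ m) / m !) * iteratedDeriv (m - 1) f l
      = (-1) ^ n * ((∫ t in l..b, (b - t) ^ n * iteratedDeriv n f t)
          - ∫ t in l..a, (a - t) ^ n * iteratedDeriv n f t) / n ! := by
  have hab : a ≤ b := hl.1.trans hl.2
  have hla : Set.uIcc l a ⊆ Set.uIcc a b := by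
    rw [Set.uIcc_of_le hab]; exact Set.uIcc_subset_Icc hl (Set.left_mem_Icc.2 hab)
  have hlb : Set.uIcc l b ⊆ Set.uIcc a b := by
    rw [Set.uIcc_of_le hab]; exact Set.uIcc_subset_Icc hl (Set.right_mem_Icc.2 hab)
  have hU' : Set.uIcc a b ⊆ U := by rwa [Set.uIcc_of_le hab]
  have htaylor := fun c (hc : Set.uIcc l c ⊆ Set.uIcc a b) =>
    integral_eq_sum_add_integral_sub_pow_mul_iteratedDeriv hU (hc.trans hU') n hdiff
      (hint.mono_set hc)
  have hf_int := fun c (hc : Set.uIcc l c ⊆ Set.uIcc a b) =>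
    intervalIntegrable_of_iteratedDeriv_s6 (hc.trans hU') hdiff (hint.mono_set hc)
  have hsum : ∑ m ∈ Icc 1 n,
      (-1 : ℝ) ^ (n - m + 2) * (((l - a) ^ m - (l - b) ^ m) / m !) * iteratedDeriv (m - 1) f l
      = (-1) ^ n * (∑ m ∈ Icc 1 n, (a - l) ^ m / m ! * iteratedDeriv (m - 1) f l
          - ∑ m ∈ Icc 1 n, (b - l) ^ m / m ! * iteratedDeriv (m - 1) f l) := by
    rw [← sum_sub_distrib, mul_sum]
    refine sum_congr rfl fun m hm => ?_
    have hmn := (mem_Icc.1 hm).2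
    rw [mul_div_assoc', mul_sub, neg_one_pow_sub_add_two_mul_pow hmn,
      neg_one_pow_sub_add_two_mul_pow hmn, neg_sub, neg_sub]
    ring
  rw [← integral_interval_sub_left (hf_int b hlb) (hf_int a hla), htaylor a hla, htaylor b hlb,
    hsum]
  ring

theorem integral_mul_le_Lp_mul_Lq_of_nonneg_weight {α : Type*} [MeasurableSpace α]
    {μ : Measure α} {p q : ℝ} (hpq : p.HolderConjugate q) {w g : α → ℝ}
    (hw : 0 ≤ᵐ[μ] w) (hg : 0 ≤ᵐ[μ] g) (hw_int : Integrable w μ)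
    (hg_meas : AEStronglyMeasurable g μ) (hwg_int : Integrable (fun x => w x * g x ^ q) μ) :
    ∫ x, w x * g x ∂μ ≤ (∫ x, w x ∂μ) ^ (1 / p) * (∫ x, w x * g x ^ q ∂μ) ^ (1 / q) := by
  have hw_meas := hw_int.aestronglyMeasurable.aemeasurable
  have hp_ne : ENNReal.ofReal p ≠ 0 := by simpa using hpq.pos
  have hq_ne : ENNReal.ofReal q ≠ 0 := by simpa using hpq.symm.pos
  have hf_nonneg : 0 ≤ᵐ[μ] fun x => w x ^ (1 / p) := hw.mono fun x hx => Real.rpow_nonneg hx _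
  have hg_nonneg : 0 ≤ᵐ[μ] fun x => w x ^ (1 / q) * g x :=
    (hw.and hg).mono fun x hx => mul_nonneg (Real.rpow_nonneg hx.1 _) hx.2
  have hweight : ∀ᵐ x ∂μ, (w x ^ (1 / p)) ^ p = w x := by
    filter_upwards [hw] with x hx
    rw [← Real.rpow_mul hx, one_div_mul_cancel hpq.ne_zero, Real.rpow_one]
  have hweighted : ∀ᵐ x ∂μ, (w x ^ (1 / q) * g x) ^ q = w x * g x ^ q := by
    filter_upwards [hw, hg] with x hx hgx
    rw [Real.mul_rpow (Real.rpow_nonneg hx _) hgx, ← Real.rpow_mul hx,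
      one_div_mul_cancel hpq.symm.ne_zero, Real.rpow_one]
  have hf_mem : MemLp (fun x => w x ^ (1 / p)) (ENNReal.ofReal p) μ := by
    refine (integrable_norm_rpow_iff (hw_meas.pow_const _).aestronglyMeasurable hp_ne
      ENNReal.ofReal_ne_top).1 ?_
    rw [ENNReal.toReal_ofReal hpq.nonneg]
    refine hw_int.congr ?_
    filter_upwards [hf_nonneg, hweight] with x hx hx'
    rw [Real.norm_of_nonneg hx, hx']
  have hg_mem : MemLp (fun x => w x ^ (1 / q) * g x) (ENNReal.ofReal q) μ := by
    refine (integrable_norm_rpow_iff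
      ((hw_meas.pow_const _).aestronglyMeasurable.mul hg_meas) hq_ne ENNReal.ofReal_ne_top).1 ?_
    rw [ENNReal.toReal_ofReal hpq.symm.nonneg]
    refine hwg_int.congr ?_
    filter_upwards [hg_nonneg, hweighted] with x hx hx'
    rw [Pi.mul_apply, Real.norm_of_nonneg hx, hx']
  have hsplit : ∀ᵐ x ∂μ, w x ^ (1 / p) * (w x ^ (1 / q) * g x) = w x * g x := by
    filter_upwards [hw] with x hx
    rw [← mul_assoc, ← Real.rpow_add' hx (by rw [hpq.one_div_add_one_div]; norm_num),
      hpq.one_div_add_one_div, one_div_one, Real.rpow_one]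
  calc ∫ x, w x * g x ∂μ
      = ∫ x, w x ^ (1 / p) * (w x ^ (1 / q) * g x) ∂μ := (integral_congr_ae hsplit).symm
    _ ≤ (∫ x, (w x ^ (1 / p)) ^ p ∂μ) ^ (1 / p) * (∫ x, (w x ^ (1 / q) * g x) ^ q ∂μ) ^ (1 / q) :=
      integral_mul_le_Lp_mul_Lq_of_nonneg hpq hf_nonneg hg_nonneg hf_mem hg_mem
    _ = _ := by rw [integral_congr_ae hweight, integral_congr_ae hweighted]

theorem integral_one_sub_pow (n : ℕ) : ∫ u in (0:ℝ)..1, (1 - u) ^ n = ((n : ℝ) + 1)⁻¹ := by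
  simp [integral_comp_sub_left fun x : ℝ => x ^ n]

theorem integral_one_sub_pow_mul_rpow_add_eq_betaF {s : ℝ} (hs : 0 ≤ s) (n : ℕ) (X Y : ℝ) :
    ∫ u in (0:ℝ)..1, (1 - u) ^ n * (u ^ s * X + (1 - u) ^ s * Y)
      = betaF (s + 1) (n + 1) * X + betaF 1 (n + s + 1) * Y := by
  have hsplit : ∀ u ∈ Set.uIcc (0:ℝ) 1, (1 - u) ^ n * (u ^ s * X + (1 - u) ^ s * Y)
      = X * (u ^ s * (1 - u) ^ (n : ℝ)) + Y * (1 - u) ^ ((n : ℝ) + s) := by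
    intro u hu
    rw [Set.uIcc_of_le zero_le_one] at hu
    rw [Real.rpow_add_of_nonneg (by linarith [hu.2]) n.cast_nonneg hs, Real.rpow_natCast]
    ring
  have hcont₁ : Continuous fun u : ℝ => u ^ s * (1 - u) ^ (n : ℝ) := by
    fun_prop (disch := positivity)
  have hcont₂ : Continuous fun u : ℝ => (1 - u) ^ ((n : ℝ) + s) := by
    fun_prop (disch := positivity)
  rw [integral_congr hsplit, integral_add ((hcont₁.intervalIntegrable 0 1).const_mul X)
    ((hcont₂.intervalIntegrable 0 1).const_mul Y), intervalIntegral.integral_const_mul,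
    intervalIntegral.integral_const_mul, betaF, betaF]
  simp only [add_sub_cancel_right, sub_self, Real.rpow_zero, one_mul]
  ring

theorem abs_integral_one_sub_pow_mul_le {s p q : ℝ} (hs : 0 ≤ s) (hpq : p.HolderConjugate q)
    {G : ℝ → ℝ} {X Y : ℝ} (n : ℕ) (hG_meas : AEStronglyMeasurable G (volume.restrict (Set.Ioc 0 1)))
    (hG : ∀ u ∈ Set.Icc (0:ℝ) 1, |G u| ^ q ≤ u ^ s * X + (1 - u) ^ s * Y) :
    |∫ u in (0:ℝ)..1, (1 - u) ^ n * G u|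
      ≤ ((n : ℝ) + 1) ^ (-(1 / p))
          * (betaF (s + 1) (n + 1) * X + betaF 1 (n + s + 1) * Y) ^ (1 / q) := by
  set μ := volume.restrict (Set.Ioc (0:ℝ) 1)
  have hunit : ∀ᵐ u ∂μ, u ∈ Set.Icc (0:ℝ) 1 :=
    ae_restrict_of_forall_mem measurableSet_Ioc fun u hu => Set.Ioc_subset_Icc_self hu
  have hw : 0 ≤ᵐ[μ] fun u => (1 - u) ^ n := hunit.mono fun u hu => pow_nonneg (by linarith [hu.2]) n
  have hw_int : Integrable (fun u : ℝ => (1 - u) ^ n) μ :=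
    (by fun_prop : Continuous fun u : ℝ => (1 - u) ^ n).integrableOn_Ioc
  have hbound_int : Integrable (fun u : ℝ => (1 - u) ^ n * (u ^ s * X + (1 - u) ^ s * Y)) μ :=
    (by fun_prop (disch := assumption) :
      Continuous fun u : ℝ => (1 - u) ^ n * (u ^ s * X + (1 - u) ^ s * Y)).integrableOn_Ioc
  have hconvex : ∀ᵐ u ∂μ, (1 - u) ^ n * |G u| ^ q ≤ (1 - u) ^ n * (u ^ s * X + (1 - u) ^ s * Y) :=
    (hw.and hunit).mono fun u hu => mul_le_mul_of_nonneg_left (hG u hu.2) hu.1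
  have hwG_nonneg : 0 ≤ᵐ[μ] fun u => (1 - u) ^ n * |G u| ^ q :=
    hw.mono fun u hu => mul_nonneg hu (Real.rpow_nonneg (abs_nonneg _) _)
  have hwG_int : Integrable (fun u => (1 - u) ^ n * |G u| ^ q) μ := by
    refine hbound_int.mono' ((hw_int.aestronglyMeasurable.aemeasurable.mul
      (hG_meas.aemeasurable.abs.pow_const q)).aestronglyMeasurable) ?_
    filter_upwards [hconvex, hwG_nonneg] with u hu hu'
    rwa [Real.norm_of_nonneg hu']
  have hholder := integral_mul_le_Lp_mul_Lq_of_nonneg_weight hpq hw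
    (ae_of_all _ fun u => abs_nonneg (G u)) hw_int hG_meas.norm hwG_int
  rw [integral_of_le zero_le_one]
  calc |∫ u, (1 - u) ^ n * G u ∂μ|
      ≤ ∫ u, |(1 - u) ^ n * G u| ∂μ := abs_integral_le_integral_abs
    _ = ∫ u, (1 - u) ^ n * |G u| ∂μ :=
        integral_congr_ae <| hw.mono fun u (hu : 0 ≤ (1 - u) ^ n) => by
          dsimp only
          rw [abs_mul, abs_of_nonneg hu]
    _ ≤ (∫ u, (1 - u) ^ n ∂μ) ^ (1 / p) * (∫ u, (1 - u) ^ n * |G u| ^ q ∂μ) ^ (1 / q) := hholder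
    _ ≤ (((n : ℝ) + 1)⁻¹) ^ (1 / p)
          * (betaF (s + 1) (n + 1) * X + betaF 1 (n + s + 1) * Y) ^ (1 / q) := by
        rw [← integral_of_le zero_le_one, integral_one_sub_pow,
          ← integral_one_sub_pow_mul_rpow_add_eq_betaF hs, integral_of_le zero_le_one]
        exact mul_le_mul_of_nonneg_left (Real.rpow_le_rpow (integral_nonneg_of_ae hwG_nonneg)
          (integral_mono_ae hwG_int hbound_int hconvex) (one_div_nonneg.2 hpq.symm.nonneg))
          (by positivity)
    _ = _ := by rw [Real.inv_rpow (by positivity), ← Real.rpow_neg (by positivity)]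

theorem integral_sub_pow_mul_eq_integral_unit (F : ℝ → ℝ) (l c : ℝ) (n : ℕ) :
    ∫ t in l..c, (c - t) ^ n * F t
      = (c - l) ^ (n + 1) * ∫ u in (0:ℝ)..1, (1 - u) ^ n * F (u * c + (1 - u) * l) := by
  have hsubst := smul_integral_comp_mul_add (a := 0) (b := 1) (fun t => (c - t) ^ n * F t) (c - l) l
  simp only [mul_zero, zero_add, mul_one, sub_add_cancel, smul_eq_mul] at hsubst
  rw [← hsubst, pow_succ', mul_assoc, ← intervalIntegral.integral_const_mul ((c - l) ^ n)]
  congr 1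
  refine integral_congr fun u _ => ?_
  rw [show c - ((c - l) * u + l) = (c - l) * (1 - u) by ring,
    show u * c + (1 - u) * l = (c - l) * u + l by ring, mul_pow, mul_assoc]

theorem abs_integral_sub_pow_mul_le_of_sConvexOn {s p q : ℝ} (hs : 0 ≤ s)
    (hpq : p.HolderConjugate q) {A : Set ℝ} {F : ℝ → ℝ} (hconv : sConvexOn s A fun x => |F x| ^ q)
    {l c : ℝ} (hc : c ∈ A) (hl : l ∈ A) (hF : IntervalIntegrable F volume l c) (n : ℕ) :
    |∫ t in l..c, (c - t) ^ n * F t| ≤ |c - l| ^ (n + 1) * (((n : ℝ) + 1) ^ (-(1 / p)) *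
      (betaF (s + 1) (n + 1) * |F c| ^ q + betaF 1 (n + s + 1) * |F l| ^ q) ^ (1 / q)) := by
  rcases eq_or_ne c l with rfl | hcl
  · simp
  have hunit : IntervalIntegrable (fun u => F ((c - l) * u + l)) volume 0 1 := by
    simpa [sub_ne_zero.2 hcl] using (hF.comp_add_right l).comp_mul_left (c := c - l)
  have hmeas : AEStronglyMeasurable (fun u => F (u * c + (1 - u) * l))
      (volume.restrict (Set.Ioc 0 1)) := by
    rw [show (fun u => F (u * c + (1 - u) * l)) = fun u => F ((c - l) * u + l) from
      funext fun u => congrArg F (by ring)]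
    exact hunit.1.aestronglyMeasurable
  rw [integral_sub_pow_mul_eq_integral_unit, abs_mul, abs_pow]
  exact mul_le_mul_of_nonneg_left
    (abs_integral_one_sub_pow_mul_le hs hpq n hmeas fun u hu => hconv c hc l hl u hu)
    (by positivity)

theorem stmt6_general (I : Set ℝ) (f : ℝ → ℝ) (n : ℕ) (a b : ℝ)
    (hsub : Set.Icc a b ⊆ interior I)
    (hdiff : ∀ k < n, DifferentiableOn ℝ (iteratedDeriv k f) (interior I))
    (hint : IntervalIntegrable (iteratedDeriv n f) volume a b)
    (s : ℝ) (hs : s ∈ Set.Ioc (0:ℝ) 1) (p q : ℝ) (hq : 1 < q) (hp : p = q / (q - 1))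
    (hsc : sConvexOn s (Set.Icc a b) (fun x => |iteratedDeriv n f x| ^ q))
    (l : ℝ) (hl : l ∈ Set.Icc a b) :
    |(-1:ℝ) ^ n * (∫ x in a..b, f x) + ∑ m ∈ Finset.Icc 1 n, (-1:ℝ) ^ (n - m + 2) * (((l - a) ^ m - (l - b) ^ m) / (m.factorial : ℝ)) * iteratedDeriv (m - 1) f l| ≤
      (((n:ℝ) + 1) ^ (-1 / p) / (n.factorial : ℝ)) *
        ((l - a) ^ (n + 1) * (betaF (s + 1) (n + 1) * |iteratedDeriv n f a| ^ q
            + betaF 1 (n + s + 1) * |iteratedDeriv n f l| ^ q) ^ (1 / q)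
         + (b - l) ^ (n + 1) * (betaF (s + 1) (n + 1) * |iteratedDeriv n f b| ^ q
            + betaF 1 (n + s + 1) * |iteratedDeriv n f l| ^ q) ^ (1 / q)) := by
  have hab : a ≤ b := hl.1.trans hl.2
  have hpq : p.HolderConjugate q := ((Real.holderConjugate_iff_eq_conjExponent hq).2 hp).symm
  have hremainder := fun c (hc : c ∈ Set.Icc a b) =>
    abs_integral_sub_pow_mul_le_of_sConvexOn hs.1.le hpq hsc hc hl
      (hint.mono_set (Set.uIcc_subset_uIcc (by rwa [Set.uIcc_of_le hab])
        (by rwa [Set.uIcc_of_le hab]))) n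
  have hA := hremainder a (Set.left_mem_Icc.2 hab)
  have hB := hremainder b (Set.right_mem_Icc.2 hab)
  rw [abs_sub_comm a l, abs_of_nonneg (sub_nonneg.2 hl.1)] at hA
  rw [abs_of_nonneg (sub_nonneg.2 hl.2)] at hB
  rw [neg_one_pow_mul_integral_add_sum_eq isOpen_interior hl hsub hdiff hint, abs_div, abs_mul,
    abs_pow, abs_neg, abs_one, one_pow, one_mul, Nat.abs_cast, neg_div]
  calc _ ≤ (|∫ t in l..b, (b - t) ^ n * iteratedDeriv n f t|
          + |∫ t in l..a, (a - t) ^ n * iteratedDeriv n f t|) / n.factorial := by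
        gcongr
        exact abs_sub _ _
    _ ≤ _ := by
        rw [div_mul_eq_mul_div, mul_comm _ (_ + _)]
        gcongr
        linarith

theorem stmt6 (I : Set ℝ) (f : ℝ → ℝ) (n : ℕ) (a b : ℝ)
    (hI : I ⊆ Set.Ici (0:ℝ)) (hab : a < b) (hsub : Set.Icc a b ⊆ interior I)
    (hdiff : ∀ k < n, DifferentiableOn ℝ (iteratedDeriv k f) (interior I))
    (hint : IntervalIntegrable (iteratedDeriv n f) volume a b)
    (s : ℝ) (hs : s ∈ Set.Ioc (0:ℝ) 1) (p q : ℝ) (hq : 1 < q) (hp : p = q / (q - 1))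
    (hsc : sConvexOn s (Set.Icc a b) (fun x => |iteratedDeriv n f x| ^ q))
    (l : ℝ) (hl : l ∈ Set.Icc a b) :
    |(-1:ℝ) ^ n * (∫ x in a..b, f x) + ∑ m ∈ Finset.Icc 1 n, (-1:ℝ) ^ (n - m + 2) * (((l - a) ^ m - (l - b) ^ m) / (m.factorial : ℝ)) * iteratedDeriv (m - 1) f l| ≤
      (((n:ℝ) + 1) ^ (-1 / p) / (n.factorial : ℝ)) *
        ((l - a) ^ (n + 1) * (betaF (s + 1) (n + 1) * |iteratedDeriv n f a| ^ q
            + betaF 1 (n + s + 1) * |iteratedDeriv n f l| ^ q) ^ (1 / q)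
         + (b - l) ^ (n + 1) * (betaF (s + 1) (n + 1) * |iteratedDeriv n f b| ^ q
            + betaF 1 (n + s + 1) * |iteratedDeriv n f l| ^ q) ^ (1 / q)) :=
  stmt6_general I f n a b hsub hdiff hint s hs p q hq hp hsc l hl
end

section
/- Let f : I ⊂ [0,∞) → ℝ be n-times differentiable on I° with f^(n) ∈ L¹[a,b], a < b, and suppose |f^(n)|^q is concave on [a,b], where q > 1 and p = q/(q-1). Then for every λ ∈ [a,b]: |(-1)^n ∫_a^b f(x) dx + Σ_{m=1}^n (-1)^(n-m+2) [((λ-a)^m − (λ-b)^m)/m!] f^(m-1)(λ)| ≤ ((np+1)^(-1/p)/n!)[(λ-a)^(n+1)|f^(n)((a+λ)/2)| + (b-λ)^(n+1)|f^(n)((b+λ)/2)|]. -/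
/-!
Integrating by parts `n` times against the kernel `K(l, x) = (x - a)ⁿ / n!` on `[a, l]` and
`(x - b)ⁿ / n!` on `[l, b]` turns the left-hand side into `|∫ₐᵇ K(l, x) f⁽ⁿ⁾(x) dx|`.
On each of `[a, l]` and `[l, b]` Hölder's inequality bounds this by `‖K‖_p ‖f⁽ⁿ⁾‖_q`, where
`‖K‖_pᵖ = (length)^(np+1) / (np+1)`, and, since `|f⁽ⁿ⁾|^q` is concave, the Hermite–Hadamard
inequality gives `‖f⁽ⁿ⁾‖_q^q ≤ length · |f⁽ⁿ⁾(midpoint)|^q`.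
-/

open MeasureTheory intervalIntegral Finset

open Set in
theorem memLp_restrict_Ioc_of_continuousOn_Ioo {h : ℝ → ℝ} {c d M : ℝ} (r : ENNReal)
    (hh : ContinuousOn h (Ioo c d)) (hM : ∀ x ∈ Icc c d, |h x| ≤ M) :
    MemLp h r (volume.restrict (Ioc c d)) := by
  rw [Measure.restrict_congr_set Ioo_ae_eq_Ioc.symm]
  exact .of_bound (hh.aestronglyMeasurable measurableSet_Ioo) M
    (ae_restrict_of_forall_mem measurableSet_Ioo fun x hx => hM x (Ioo_subset_Icc_self hx))

namespace ConcaveOn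

open Set

variable {G : ℝ → ℝ} {c d : ℝ}

theorem continuousOn_Ioo (hG : ConcaveOn ℝ (Icc c d) G) : ContinuousOn G (Ioo c d) := by
  simpa using hG.continuousOn_interior

theorem add_reflect_le (hG : ConcaveOn ℝ (Icc c d) G) {x : ℝ} (hx : x ∈ Icc c d) :
    G x + G (c + d - x) ≤ 2 * G ((c + d) / 2) := by
  have hx' : c + d - x ∈ Icc c d := ⟨by linarith [hx.2], by linarith [hx.1]⟩
  have := hG.2 hx hx' (by norm_num : (0 : ℝ) ≤ 1 / 2) (by norm_num : (0 : ℝ) ≤ 1 / 2)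
    (by norm_num)
  rw [show (1 / 2 : ℝ) • x + (1 / 2 : ℝ) • (c + d - x) = (c + d) / 2 by simp; ring] at this
  simp only [smul_eq_mul] at this
  linarith

theorem exists_abs_le (hG : ConcaveOn ℝ (Icc c d) G) : ∃ M, ∀ x ∈ Icc c d, |G x| ≤ M := by
  refine ⟨max |min (G c) (G d)| |2 * G ((c + d) / 2) - min (G c) (G d)|, fun x hx => ?_⟩
  have hcd : c ≤ d := hx.1.trans hx.2
  have hmin : ∀ y ∈ Icc c d, min (G c) (G d) ≤ G y := fun y hy =>
    hG.min_le_of_mem_Icc (left_mem_Icc.2 hcd) (right_mem_Icc.2 hcd) hy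
  have hx' : c + d - x ∈ Icc c d := ⟨by linarith [hx.2], by linarith [hx.1]⟩
  exact abs_le_max_abs_abs (hmin x hx) (by linarith [hG.add_reflect_le hx, hmin _ hx'])

theorem intervalIntegrable (hG : ConcaveOn ℝ (Icc c d) G) (hcd : c ≤ d) :
    IntervalIntegrable G volume c d := by
  obtain ⟨M, hM⟩ := hG.exists_abs_le
  rw [intervalIntegrable_iff_integrableOn_Ioc_of_le hcd, IntegrableOn,
    ← memLp_one_iff_integrable]
  exact memLp_restrict_Ioc_of_continuousOn_Ioo 1 hG.continuousOn_Ioo hM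

theorem integral_le_mul_midpoint (hG : ConcaveOn ℝ (Icc c d) G) (hcd : c ≤ d) :
    ∫ x in c..d, G x ≤ (d - c) * G ((c + d) / 2) := by
  have hint := hG.intervalIntegrable hcd
  have hrefl : IntervalIntegrable (fun x => G (c + d - x)) volume c d := by
    simpa using (hint.comp_sub_left (c + d)).symm
  have hsum := integral_mono_on hcd (hint.add hrefl) intervalIntegrable_const
    fun x hx => hG.add_reflect_le hx
  rw [integral_add hint hrefl, integral_comp_sub_left G (c + d), intervalIntegral.integral_const,
    smul_eq_mul] at hsum
  simp only [add_sub_cancel_right, add_sub_cancel_left] at hsum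
  linarith

variable {g : ℝ → ℝ} {q : ℝ}

theorem continuousOn_Ioo_of_rpow (hq : 0 < q) (hg0 : ∀ x ∈ Icc c d, 0 ≤ g x)
    (hg : ConcaveOn ℝ (Icc c d) fun x => g x ^ q) : ContinuousOn g (Ioo c d) :=
  (hg.continuousOn_Ioo.rpow_const fun _ _ => Or.inr (by positivity)).congr fun x hx =>
    (Real.rpow_rpow_inv (hg0 x (Ioo_subset_Icc_self hx)) hq.ne').symm

theorem exists_abs_le_of_rpow (hq : 0 < q) (hg0 : ∀ x ∈ Icc c d, 0 ≤ g x)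
    (hg : ConcaveOn ℝ (Icc c d) fun x => g x ^ q) : ∃ M, ∀ x ∈ Icc c d, |g x| ≤ M := by
  obtain ⟨M, hM⟩ := hg.exists_abs_le
  refine ⟨M ^ q⁻¹, fun x hx => ?_⟩
  rw [abs_of_nonneg (hg0 x hx), ← Real.rpow_rpow_inv (hg0 x hx) hq.ne']
  exact Real.rpow_le_rpow (Real.rpow_nonneg (hg0 x hx) q) ((le_abs_self _).trans (hM x hx))
    (by positivity)

end ConcaveOn

open Set in
theorem integral_mul_le_of_concaveOn_rpow {F g : ℝ → ℝ} {c d p q : ℝ}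
    (hpq : p.HolderConjugate q) (hcd : c ≤ d)
    (hF : ContinuousOn F (Icc c d)) (hF0 : ∀ x ∈ Icc c d, 0 ≤ F x)
    (hg0 : ∀ x ∈ Icc c d, 0 ≤ g x) (hg : ConcaveOn ℝ (Icc c d) fun x => g x ^ q) :
    ∫ x in c..d, F x * g x ≤
      (∫ x in c..d, F x ^ p) ^ (1 / p) * ((d - c) * g ((c + d) / 2) ^ q) ^ (1 / q) := by
  have hIoc : ∀ x ∈ Ioc c d, x ∈ Icc c d := fun _ hx => Set.Ioc_subset_Icc_self hx
  obtain ⟨MF, hMF⟩ := isCompact_Icc.exists_bound_of_continuousOn hF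
  obtain ⟨Mg, hMg⟩ := hg.exists_abs_le_of_rpow hpq.symm.pos hg0
  have hFLp : MemLp F (ENNReal.ofReal p) (volume.restrict (Ioc c d)) :=
    memLp_restrict_Ioc_of_continuousOn_Ioo _ (hF.mono Ioo_subset_Icc_self) hMF
  have hgLq : MemLp g (ENNReal.ofReal q) (volume.restrict (Ioc c d)) :=
    memLp_restrict_Ioc_of_continuousOn_Ioo _ (hg.continuousOn_Ioo_of_rpow hpq.symm.pos hg0) hMg
  have hHH := hg.integral_le_mul_midpoint hcd
  rw [integral_of_le hcd] at hHH
  rw [integral_of_le hcd, integral_of_le hcd]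
  calc ∫ x in Ioc c d, F x * g x
      ≤ (∫ x in Ioc c d, F x ^ p) ^ (1 / p) * (∫ x in Ioc c d, g x ^ q) ^ (1 / q) :=
        integral_mul_le_Lp_mul_Lq_of_nonneg hpq
          (ae_restrict_of_forall_mem measurableSet_Ioc fun x hx => hF0 x (hIoc x hx))
          (ae_restrict_of_forall_mem measurableSet_Ioc fun x hx => hg0 x (hIoc x hx)) hFLp hgLq
    _ ≤ _ := by
        have hFp : 0 ≤ ∫ x in Ioc c d, F x ^ p := setIntegral_nonneg measurableSet_Ioc
          fun x hx => Real.rpow_nonneg (hF0 x (hIoc x hx)) p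
        have hgq : 0 ≤ ∫ x in Ioc c d, g x ^ q := setIntegral_nonneg measurableSet_Ioc
          fun x hx => Real.rpow_nonneg (hg0 x (hIoc x hx)) q
        exact mul_le_mul_of_nonneg_left
          (Real.rpow_le_rpow hgq hHH (one_div_nonneg.2 hpq.symm.nonneg)) (Real.rpow_nonneg hFp _)

open Set in
theorem integral_abs_sub_pow_rpow {c d e p : ℝ} (n : ℕ) (hcd : c ≤ d) (he : e = c ∨ e = d)
    (hp : 0 ≤ p) : ∫ x in c..d, (|x - e| ^ n) ^ p = (d - c) ^ (n * p + 1) / (n * p + 1) := by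
  have hrpow : ∀ y : ℝ, (|y| ^ n) ^ p = |y| ^ (n * p) := fun y => by
    rw [← Real.rpow_natCast, ← Real.rpow_mul (abs_nonneg y)]
  have hnp : -1 < (n : ℝ) * p := by linarith [mul_nonneg n.cast_nonneg hp]
  have hbase : ∫ y in (0 : ℝ)..d - c, |y| ^ (n * p) = (d - c) ^ (n * p + 1) / (n * p + 1) := by
    have habs : EqOn (fun y : ℝ => |y| ^ (n * p)) (fun y => y ^ (n * p)) (uIcc 0 (d - c)) :=
      fun y hy => by
        rw [uIcc_of_le (sub_nonneg.2 hcd)] at hy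
        simp only [abs_of_nonneg hy.1]
    rw [integral_congr habs, integral_rpow (Or.inl hnp), Real.zero_rpow (by linarith), sub_zero]
  simp_rw [hrpow]
  rcases he with rfl | rfl
  · rw [integral_comp_sub_right (fun y => |y| ^ (n * p)), sub_self, hbase]
  · simp_rw [abs_sub_comm _ e]
    rw [integral_comp_sub_left (fun y => |y| ^ (n * p)), sub_self, hbase]

theorem integral_abs_sub_pow_mul_le_of_concaveOn_rpow {g : ℝ → ℝ} {c d e p q : ℝ} (n : ℕ)
    (hpq : p.HolderConjugate q) (hcd : c ≤ d) (he : e = c ∨ e = d)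
    (hg0 : ∀ x ∈ Set.Icc c d, 0 ≤ g x) (hg : ConcaveOn ℝ (Set.Icc c d) fun x => g x ^ q) :
    ∫ x in c..d, |x - e| ^ n * g x ≤
      (n * p + 1) ^ (-1 / p) * (d - c) ^ (n + 1) * g ((c + d) / 2) := by
  have hW : 0 ≤ d - c := sub_nonneg.2 hcd
  have hm : 0 ≤ g ((c + d) / 2) := hg0 _ ⟨by linarith, by linarith⟩
  have hA : 0 < (n : ℝ) * p + 1 := by have := hpq.pos; positivity
  have hexp : (n * p + 1) * (1 / p) + 1 / q = (n : ℝ) + 1 := by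
    rw [add_mul, mul_assoc, mul_one_div_cancel hpq.ne_zero, mul_one, one_mul, add_assoc,
      hpq.one_div_add_one_div, div_one]
  refine (integral_mul_le_of_concaveOn_rpow hpq hcd (by fun_prop) (fun x _ => by positivity)
    hg0 hg).trans_eq ?_
  rw [integral_abs_sub_pow_rpow n hcd he hpq.nonneg, Real.div_rpow (by positivity) hA.le,
    Real.mul_rpow hW (Real.rpow_nonneg hm q), one_div q, Real.rpow_rpow_inv hm hpq.symm.ne_zero,
    ← Real.rpow_mul hW, neg_div, Real.rpow_neg hA.le, ← one_div q, div_eq_inv_mul, mul_assoc,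
    ← mul_assoc ((d - c) ^ _), ← Real.rpow_add' hW (by rw [hexp]; positivity), hexp]
  norm_cast
  ring

theorem abs_integral_sub_pow_div_factorial_mul_le {h : ℝ → ℝ} {c d : ℝ} (e : ℝ) (n : ℕ)
    (hcd : c ≤ d) :
    |∫ x in c..d, (x - e) ^ n / n.factorial * h x| ≤
      (∫ x in c..d, |x - e| ^ n * |h x|) / n.factorial := by
  rw [← intervalIntegral.integral_div]
  refine (abs_integral_le_integral_abs hcd).trans_eq (integral_congr fun x _ => ?_)
  simp only [abs_mul, abs_div, abs_pow, Nat.abs_cast]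
  ring

theorem hasDerivAt_sub_pow_succ_div_factorial (e : ℝ) (k : ℕ) (x : ℝ) :
    HasDerivAt (fun y => (y - e) ^ (k + 1) / (k + 1).factorial)
      ((x - e) ^ k / k.factorial) x := by
  refine ((((hasDerivAt_id x).sub_const e).pow (k + 1)).div_const
    ((k + 1).factorial : ℝ)).congr_deriv ?_
  rw [Nat.factorial_succ]
  push_cast
  field_simp
  simp

theorem integral_sub_pow_succ_div_factorial_mul {v v' : ℝ → ℝ} {c d : ℝ} (e : ℝ) (k : ℕ)
    (hv : ∀ x ∈ Set.uIcc c d, HasDerivAt v (v' x) x) (hv' : IntervalIntegrable v' volume c d) :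
    ∫ x in c..d, (x - e) ^ (k + 1) / (k + 1).factorial * v' x =
      (d - e) ^ (k + 1) / (k + 1).factorial * v d - (c - e) ^ (k + 1) / (k + 1).factorial * v c
        - ∫ x in c..d, (x - e) ^ k / k.factorial * v x :=
  intervalIntegral.integral_mul_deriv_eq_deriv_mul
    (fun x _ => hasDerivAt_sub_pow_succ_div_factorial e k x) hv
    ((by fun_prop : Continuous fun x => (x - e) ^ k / k.factorial).intervalIntegrable c d) hv'

theorem eq_sum_Icc_of_eq_sub {α : Type*} [CommRing α] {R c : ℕ → α} {n : ℕ}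
    (h : ∀ k < n, R (k + 1) = c (k + 1) - R k) {k : ℕ} (hk : k ≤ n) :
    R k = ∑ m ∈ Icc 1 k, (-1) ^ (k - m) * c m + (-1) ^ k * R 0 := by
  induction k with
  | zero => simp
  | succ k ih =>
    have hsign : ∀ m ∈ Icc 1 k, (-1 : α) ^ (k + 1 - m) * c m = -((-1) ^ (k - m) * c m) :=
      fun m hm => by rw [Nat.sub_add_comm (mem_Icc.1 hm).2, pow_succ]; ring
    rw [h k hk, ih (by omega), sum_Icc_succ_top (by omega), sum_congr rfl hsign, sum_neg_distrib,
      Nat.sub_self, pow_zero, pow_succ]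
    ring

noncomputable def kernelIntegral (f : ℝ → ℝ) (a b l : ℝ) (k : ℕ) : ℝ :=
  (∫ x in a..l, (x - a) ^ k / k.factorial * iteratedDeriv k f x) +
    ∫ x in l..b, (x - b) ^ k / k.factorial * iteratedDeriv k f x

section kernelIntegral

open Set

variable {f : ℝ → ℝ} {a b l : ℝ}

theorem kernelIntegral_zero (hl : l ∈ Icc a b) (hf : IntervalIntegrable f volume a b) :
    kernelIntegral f a b l 0 = ∫ x in a..b, f x := by
  have hsub : ∀ {c d}, c ∈ Icc a b → d ∈ Icc a b → uIcc c d ⊆ uIcc a b := fun hc hd => by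
    rw [uIcc_of_le (hl.1.trans hl.2)]; exact uIcc_subset_Icc hc hd
  simp only [kernelIntegral, pow_zero, Nat.factorial_zero, Nat.cast_one, div_one, one_mul,
    iteratedDeriv_zero]
  exact integral_add_adjacent_intervals (hf.mono_set (hsub (left_mem_Icc.2 (hl.1.trans hl.2)) hl))
    (hf.mono_set (hsub hl (right_mem_Icc.2 (hl.1.trans hl.2))))

theorem kernelIntegral_succ {k : ℕ} (hl : l ∈ Icc a b)
    (hderiv : ∀ x ∈ Icc a b, HasDerivAt (iteratedDeriv k f) (iteratedDeriv (k + 1) f x) x)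
    (hint : IntervalIntegrable (iteratedDeriv (k + 1) f) volume a b) :
    kernelIntegral f a b l (k + 1) =
      ((l - a) ^ (k + 1) - (l - b) ^ (k + 1)) / (k + 1).factorial * iteratedDeriv k f l
        - kernelIntegral f a b l k := by
  have hab : a ≤ b := hl.1.trans hl.2
  have hsub : ∀ {c d}, c ∈ Icc a b → d ∈ Icc a b → uIcc c d ⊆ Icc a b := uIcc_subset_Icc
  have hsub' : ∀ {c d}, c ∈ Icc a b → d ∈ Icc a b → uIcc c d ⊆ uIcc a b := fun hc hd => by
    rw [uIcc_of_le hab]; exact hsub hc hd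
  have ha : a ∈ Icc a b := Set.left_mem_Icc.2 hab
  have hb : b ∈ Icc a b := Set.right_mem_Icc.2 hab
  rw [kernelIntegral, kernelIntegral,
    integral_sub_pow_succ_div_factorial_mul a k (fun x hx => hderiv x (hsub ha hl hx))
      (hint.mono_set (hsub' ha hl)),
    integral_sub_pow_succ_div_factorial_mul b k (fun x hx => hderiv x (hsub hl hb hx))
      (hint.mono_set (hsub' hl hb))]
  simp only [sub_self, zero_pow k.succ_ne_zero, zero_div, zero_mul]
  ring

theorem kernelIntegral_eq {n : ℕ} (hl : l ∈ Icc a b)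
    (hderiv : ∀ k < n, ∀ x ∈ Icc a b,
      HasDerivAt (iteratedDeriv k f) (iteratedDeriv (k + 1) f x) x)
    (hint : ∀ k ≤ n, IntervalIntegrable (iteratedDeriv k f) volume a b) :
    kernelIntegral f a b l n =
      ∑ m ∈ Finset.Icc 1 n, (-1) ^ (n - m) *
        (((l - a) ^ m - (l - b) ^ m) / m.factorial * iteratedDeriv (m - 1) f l)
      + (-1) ^ n * ∫ x in a..b, f x := by
  rw [eq_sum_Icc_of_eq_sub (R := kernelIntegral f a b l)
    (c := fun m => ((l - a) ^ m - (l - b) ^ m) / m.factorial * iteratedDeriv (m - 1) f l)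
    (fun k hk => kernelIntegral_succ hl (hderiv k hk) (hint (k + 1) hk)) le_rfl,
    kernelIntegral_zero hl (by simpa using hint 0 n.zero_le)]

theorem abs_kernelIntegral_le {n : ℕ} {p q : ℝ} (hpq : p.HolderConjugate q) (hl : l ∈ Icc a b)
    (hc : ConcaveOn ℝ (Icc a b) fun x => |iteratedDeriv n f x| ^ q) :
    |kernelIntegral f a b l n| ≤ (n * p + 1) ^ (-1 / p) / n.factorial *
      ((l - a) ^ (n + 1) * |iteratedDeriv n f ((a + l) / 2)|
        + (b - l) ^ (n + 1) * |iteratedDeriv n f ((b + l) / 2)|) := by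
  have hleft := integral_abs_sub_pow_mul_le_of_concaveOn_rpow n hpq hl.1 (Or.inl rfl)
    (fun x _ => abs_nonneg _) (hc.subset (Icc_subset_Icc_right hl.2) (convex_Icc a l))
  have hright := integral_abs_sub_pow_mul_le_of_concaveOn_rpow n hpq hl.2 (Or.inr rfl)
    (fun x _ => abs_nonneg _) (hc.subset (Icc_subset_Icc_left hl.1) (convex_Icc l b))
  calc _ ≤ _ := abs_add_le _ _
    _ ≤ _ := add_le_add
        ((abs_integral_sub_pow_div_factorial_mul_le a n hl.1).trans
          (div_le_div_of_nonneg_right hleft n.factorial.cast_nonneg))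
        ((abs_integral_sub_pow_div_factorial_mul_le b n hl.2).trans
          (div_le_div_of_nonneg_right hright n.factorial.cast_nonneg))
    _ = _ := by rw [add_comm l b]; ring

end kernelIntegral

theorem stmt7_general (I : Set ℝ) (f : ℝ → ℝ) (n : ℕ) (a b : ℝ)
    (hab : a < b) (hsub : Set.Icc a b ⊆ interior I)
    (hdiff : ∀ k < n, DifferentiableOn ℝ (iteratedDeriv k f) (interior I))
    (hint : IntervalIntegrable (iteratedDeriv n f) volume a b)
    (p q : ℝ) (hq : 1 < q) (hp : p = q / (q - 1))
    (hc : ConcaveOn ℝ (Set.Icc a b) (fun x => |iteratedDeriv n f x| ^ q))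
    (l : ℝ) (hl : l ∈ Set.Icc a b) :
    |(-1:ℝ) ^ n * (∫ x in a..b, f x) + ∑ m ∈ Finset.Icc 1 n, (-1:ℝ) ^ (n - m + 2) * (((l - a) ^ m - (l - b) ^ m) / (m.factorial : ℝ)) * iteratedDeriv (m - 1) f l| ≤
      (((n:ℝ) * p + 1) ^ (-1 / p) / (n.factorial : ℝ)) *
        ((l - a) ^ (n + 1) * |iteratedDeriv n f ((a + l) / 2)|
         + (b - l) ^ (n + 1) * |iteratedDeriv n f ((b + l) / 2)|) := by
  have hpq : p.HolderConjugate q := hp ▸ (Real.HolderConjugate.conjExponent hq).symm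
  have hderiv : ∀ k < n, ∀ x ∈ Set.Icc a b,
      HasDerivAt (iteratedDeriv k f) (iteratedDeriv (k + 1) f x) x := fun k hk x hx => by
    rw [iteratedDeriv_succ]
    exact ((hdiff k hk).differentiableAt (isOpen_interior.mem_nhds (hsub hx))).hasDerivAt
  have hintk : ∀ k ≤ n, IntervalIntegrable (iteratedDeriv k f) volume a b := fun k hk =>
    hk.lt_or_eq.elim (fun hk => ((hdiff k hk).continuousOn.mono hsub).intervalIntegrable_of_Icc
      hab.le) (· ▸ hint)
  calc _ = |kernelIntegral f a b l n| := by
        rw [kernelIntegral_eq hl hderiv hintk, add_comm]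
        exact congrArg (|· + _|) (sum_congr rfl fun m _ => by ring)
    _ ≤ _ := abs_kernelIntegral_le hpq hl hc

theorem stmt7 (I : Set ℝ) (f : ℝ → ℝ) (n : ℕ) (a b : ℝ)
    (hI : I ⊆ Set.Ici (0:ℝ)) (hab : a < b) (hsub : Set.Icc a b ⊆ interior I)
    (hdiff : ∀ k < n, DifferentiableOn ℝ (iteratedDeriv k f) (interior I))
    (hint : IntervalIntegrable (iteratedDeriv n f) volume a b)
    (p q : ℝ) (hq : 1 < q) (hp : p = q / (q - 1))
    (hc : ConcaveOn ℝ (Set.Icc a b) (fun x => |iteratedDeriv n f x| ^ q))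
    (l : ℝ) (hl : l ∈ Set.Icc a b) :
    |(-1:ℝ) ^ n * (∫ x in a..b, f x) + ∑ m ∈ Finset.Icc 1 n, (-1:ℝ) ^ (n - m + 2) * (((l - a) ^ m - (l - b) ^ m) / (m.factorial : ℝ)) * iteratedDeriv (m - 1) f l| ≤
      (((n:ℝ) * p + 1) ^ (-1 / p) / (n.factorial : ℝ)) *
        ((l - a) ^ (n + 1) * |iteratedDeriv n f ((a + l) / 2)|
         + (b - l) ^ (n + 1) * |iteratedDeriv n f ((b + l) / 2)|) :=
  stmt7_general I f n a b hab hsub hdiff hint p q hq hp hc l hl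
end

section
/- Let f : I ⊂ [0,∞) → ℝ be twice differentiable with f'' ∈ L¹[a,b], a < b, and suppose |f''|^q is convex on [a,b], q > 1, p = q/(q-1). Then |(f(a)+f(b))/2 − (1/(b-a)) ∫_a^b f(x) dx| ≤ ((b-a)²/(2·6^(1/p)))(1/12)^(1/q)[|f''(a)|^q + |f''(b)|^q]^(1/q) ≤ ((b-a)²/(2·6^(1/p)))(1/12)^(1/q)[|f''(a)| + |f''(b)|]. -/
/-!
Integrating by parts twice against the weight `w x = (x - a) * (b - x)` gives
`(f a + f b) / 2 - (1 / (b - a)) * ∫ f = (1 / (2 * (b - a))) * ∫ w * f''`.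
Hölder's inequality with the splitting `w * |f''| = w ^ (1 / p) * (w ^ (1 / q) * |f''|)` bounds
`∫ w * |f''|` by `(∫ w) ^ (1 / p) * (∫ w * |f''| ^ q) ^ (1 / q)`, where `∫ w = (b - a) ^ 3 / 6`.
By convexity `|f''| ^ q` lies below its chord, and integrating the chord against `w` gives
`(b - a) ^ 3 / 12 * (|f'' a| ^ q + |f'' b| ^ q)`. The second inequality is the subadditivity
of `t ↦ t ^ (1 / q)`.
-/

open MeasureTheory intervalIntegral Set

theorem DifferentiableOn.hasDerivAt_iteratedDeriv {𝕜 F : Type*} [NontriviallyNormedField 𝕜]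
    [NormedAddCommGroup F] [NormedSpace 𝕜 F] {f : 𝕜 → F} {s : Set 𝕜} {n : ℕ} {x : 𝕜}
    (h : DifferentiableOn 𝕜 (iteratedDeriv n f) s) (hs : s ∈ nhds x) :
    HasDerivAt (iteratedDeriv n f) (iteratedDeriv (n + 1) f x) x := by
  rw [iteratedDeriv_succ]
  exact (h.differentiableAt hs).hasDerivAt

theorem integral_sub_mul_sub_mul_eq_trapezoid {f f' f'' : ℝ → ℝ} {a b : ℝ}
    (hf : ∀ x ∈ uIcc a b, HasDerivAt f (f' x) x) (hf' : ∀ x ∈ uIcc a b, HasDerivAt f' (f'' x) x)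
    (hf'' : IntervalIntegrable f'' volume a b) :
    ∫ x in a..b, (x - a) * (b - x) * f'' x = (b - a) * (f a + f b) - 2 * ∫ x in a..b, f x := by
  have hw : ∀ x, HasDerivAt (fun x => (x - a) * (b - x)) (a + b - 2 * x) x := fun x =>
    (((hasDerivAt_id' x).sub_const a).fun_mul ((hasDerivAt_id' x).const_sub b)).congr_deriv
      (by ring)
  have hw' : ∀ x, HasDerivAt (fun x => a + b - 2 * x) (-2) x := fun x =>
    (((hasDerivAt_id' x).const_mul 2).const_sub (a + b)).congr_deriv (by ring)
  have hf'i : IntervalIntegrable f' volume a b :=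
    ContinuousOn.intervalIntegrable fun x hx => (hf' x hx).continuousAt.continuousWithinAt
  rw [integral_mul_deriv_eq_deriv_mul (fun x _ => hw x) hf'
      (Continuous.intervalIntegrable (by fun_prop) a b) hf'',
    integral_mul_deriv_eq_deriv_mul (fun x _ => hw' x) hf intervalIntegrable_const hf'i,
    intervalIntegral.integral_const_mul]
  ring

theorem integral_sub_mul_sub (a b : ℝ) : ∫ x in a..b, (x - a) * (b - x) = (b - a) ^ 3 / 6 := by
  rw [integral_eq_sub_of_hasDerivAt (f := fun x => (x - a) ^ 2 * (b - x) / 2 + (x - a) ^ 3 / 6)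
    (fun x _ => ?_) (Continuous.intervalIntegrable (by fun_prop) a b)]
  · ring
  · exact (((((hasDerivAt_id' x).sub_const a).fun_pow 2).fun_mul
      ((hasDerivAt_id' x).const_sub b)).div_const 2).fun_add
      ((((hasDerivAt_id' x).sub_const a).fun_pow 3).div_const 6) |>.congr_deriv (by ring)

theorem integral_sub_mul_sub_sq (a b : ℝ) :
    ∫ x in a..b, (x - a) * (b - x) ^ 2 = (b - a) ^ 4 / 12 := by
  rw [integral_eq_sub_of_hasDerivAt (f := fun x => -((x - a) * (b - x) ^ 3 / 3) - (b - x) ^ 4 / 12)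
    (fun x _ => ?_) (Continuous.intervalIntegrable (by fun_prop) a b)]
  · ring
  · exact (((((hasDerivAt_id' x).sub_const a).fun_mul
      (((hasDerivAt_id' x).const_sub b).fun_pow 3)).div_const 3).fun_neg).fun_sub
      ((((hasDerivAt_id' x).const_sub b).fun_pow 4).div_const 12) |>.congr_deriv (by ring)

theorem integral_sub_sq_mul_sub (a b : ℝ) :
    ∫ x in a..b, (x - a) ^ 2 * (b - x) = (b - a) ^ 4 / 12 := by
  have h := integral_comp_sub_left (fun x => (x - a) * (b - x) ^ 2) (a := a) (b := b) (a + b)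
  simp only [add_sub_cancel_right, add_sub_cancel_left, integral_sub_mul_sub_sq] at h
  rw [← h]
  exact integral_congr fun x _ => by ring

theorem ConvexOn.sub_mul_le_of_mem_Icc {g : ℝ → ℝ} {a b x : ℝ} (hg : ConvexOn ℝ (Icc a b) g)
    (hab : a < b) (hx : x ∈ Icc a b) :
    (b - a) * g x ≤ (b - x) * g a + (x - a) * g b := by
  have hba : 0 < b - a := sub_pos.2 hab
  have h := hg.2 (left_mem_Icc.2 hab.le) (right_mem_Icc.2 hab.le)
    (div_nonneg (sub_nonneg.2 hx.2) hba.le) (div_nonneg (sub_nonneg.2 hx.1) hba.le)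
    (by field_simp; ring)
  simp only [smul_eq_mul] at h
  rw [show (b - x) / (b - a) * a + (x - a) / (b - a) * b = x by field_simp; ring] at h
  rw [← le_div_iff₀' hba]
  convert h using 1
  field_simp

theorem ConvexOn.intervalIntegrable_of_nonneg {g : ℝ → ℝ} {a b : ℝ}
    (hg : ConvexOn ℝ (Icc a b) g) (hab : a ≤ b) (hg0 : ∀ x ∈ Icc a b, 0 ≤ g x)
    (hm : AEStronglyMeasurable g (volume.restrict (Ioc a b))) :
    IntervalIntegrable g volume a b := by
  refine (intervalIntegrable_iff_integrableOn_Ioc_of_le hab).2 <|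
    Integrable.mono' (g := fun _ => max (g a) (g b)) (continuous_const.integrableOn_Ioc) hm ?_
  filter_upwards [ae_restrict_mem measurableSet_Ioc] with x hx
  rw [Real.norm_eq_abs, abs_of_nonneg (hg0 x (Ioc_subset_Icc_self hx))]
  exact hg.le_max_of_mem_Icc (left_mem_Icc.2 hab) (right_mem_Icc.2 hab)
    (Ioc_subset_Icc_self hx)

theorem integral_sub_mul_sub_mul_le_of_convexOn {g : ℝ → ℝ} {a b : ℝ}
    (hg : ConvexOn ℝ (Icc a b) g) (hab : a < b)
    (hi : IntervalIntegrable (fun x => (x - a) * (b - x) * g x) volume a b) :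
    ∫ x in a..b, (x - a) * (b - x) * g x ≤ (b - a) ^ 3 / 12 * (g a + g b) := by
  have hba : 0 < b - a := sub_pos.2 hab
  rw [← mul_le_mul_iff_right₀ hba, ← intervalIntegral.integral_const_mul]
  calc ∫ x in a..b, (b - a) * ((x - a) * (b - x) * g x)
      ≤ ∫ x in a..b, (g a * ((x - a) * (b - x) ^ 2) + g b * ((x - a) ^ 2 * (b - x))) := by
        refine integral_mono_on hab.le (hi.const_mul _)
          (Continuous.intervalIntegrable (by fun_prop) a b) fun x hx => ?_
        have := mul_le_mul_of_nonneg_left (hg.sub_mul_le_of_mem_Icc hab hx)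
          (mul_nonneg (sub_nonneg.2 hx.1) (sub_nonneg.2 hx.2))
        linarith
    _ = (b - a) * ((b - a) ^ 3 / 12 * (g a + g b)) := by
        rw [integral_add (Continuous.intervalIntegrable (by fun_prop) a b)
            (Continuous.intervalIntegrable (by fun_prop) a b),
          intervalIntegral.integral_const_mul, intervalIntegral.integral_const_mul,
          integral_sub_mul_sub_sq, integral_sub_sq_mul_sub]
        ring

theorem Real.HolderConjugate.rpow_one_div_mul_rpow_one_div {p q t : ℝ} (hpq : p.HolderConjugate q)
    (ht : 0 ≤ t) : t ^ (1 / p) * t ^ (1 / q) = t := by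
  have h : 1 / p + 1 / q = 1 := by simpa using hpq.one_div_add_one_div
  rw [← Real.rpow_add' ht (by rw [h]; exact one_ne_zero), h, Real.rpow_one]

theorem memLp_ofReal_of_integrable_rpow {α : Type*} [MeasurableSpace α] {μ : Measure α}
    {f : α → ℝ} {r : ℝ} (hr : 0 < r) (hf : AEStronglyMeasurable f μ) (hf0 : 0 ≤ᵐ[μ] f)
    (hi : Integrable (fun x => f x ^ r) μ) : MemLp f (ENNReal.ofReal r) μ := by
  rw [← integrable_norm_rpow_iff hf (by simpa using hr) ENNReal.ofReal_ne_top,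
    ENNReal.toReal_ofReal hr.le]
  refine hi.congr ?_
  filter_upwards [hf0] with x hx
  rw [Real.norm_eq_abs, abs_of_nonneg hx]

theorem integral_mul_abs_le_of_holderConjugate {α : Type*} [MeasurableSpace α] {μ : Measure α}
    {p q : ℝ} (hpq : p.HolderConjugate q) {w g : α → ℝ} (hw : 0 ≤ᵐ[μ] w)
    (hg : AEStronglyMeasurable g μ) (hwi : Integrable w μ)
    (hwgi : Integrable (fun x => w x * |g x| ^ q) μ) :
    ∫ x, w x * |g x| ∂μ ≤ (∫ x, w x ∂μ) ^ (1 / p) * (∫ x, w x * |g x| ^ q ∂μ) ^ (1 / q) := by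
  have hp := hpq.pos
  have hq := hpq.symm.pos
  have hF0 : 0 ≤ᵐ[μ] fun x => w x ^ (1 / p) := hw.mono fun x hx => Real.rpow_nonneg hx _
  have hG0 : 0 ≤ᵐ[μ] fun x => w x ^ (1 / q) * |g x| :=
    hw.mono fun x hx => mul_nonneg (Real.rpow_nonneg hx _) (abs_nonneg _)
  have hFG : (fun x => w x * |g x|) =ᵐ[μ] fun x => w x ^ (1 / p) * (w x ^ (1 / q) * |g x|) :=
    hw.mono fun x hx => by
      dsimp only
      rw [← mul_assoc, hpq.rpow_one_div_mul_rpow_one_div hx]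
  have hFp : (fun x => (w x ^ (1 / p)) ^ p) =ᵐ[μ] w :=
    hw.mono fun x hx => by
      dsimp only
      rw [← Real.rpow_mul hx, one_div_mul_cancel hp.ne', Real.rpow_one]
  have hGq : (fun x => (w x ^ (1 / q) * |g x|) ^ q) =ᵐ[μ] fun x => w x * |g x| ^ q :=
    hw.mono fun x hx => by
      dsimp only
      rw [Real.mul_rpow (Real.rpow_nonneg hx _) (abs_nonneg _), ← Real.rpow_mul hx,
        one_div_mul_cancel hq.ne', Real.rpow_one]
  have hwp : AEStronglyMeasurable (fun x => w x ^ (1 / p)) μ :=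
    (Real.continuous_rpow_const (by positivity)).comp_aestronglyMeasurable hwi.1
  have hwq : AEStronglyMeasurable (fun x => w x ^ (1 / q) * |g x|) μ :=
    ((Real.continuous_rpow_const (by positivity)).comp_aestronglyMeasurable hwi.1).mul hg.norm
  rw [integral_congr_ae hFG, ← integral_congr_ae hFp, ← integral_congr_ae hGq]
  exact integral_mul_le_Lp_mul_Lq_of_nonneg hpq hF0 hG0
    (memLp_ofReal_of_integrable_rpow hp hwp hF0 (hwi.congr hFp.symm))
    (memLp_ofReal_of_integrable_rpow hq hwq hG0 (hwgi.congr hGq.symm))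

theorem abs_integral_sub_mul_sub_mul_le {g : ℝ → ℝ} {a b p q : ℝ} (hpq : p.HolderConjugate q)
    (hab : a < b) (hg : IntervalIntegrable g volume a b)
    (hc : ConvexOn ℝ (Icc a b) (fun x => |g x| ^ q)) :
    |∫ x in a..b, (x - a) * (b - x) * g x| ≤
      (b - a) ^ 3 / 6 ^ (1 / p) * (1 / 12) ^ (1 / q) * (|g a| ^ q + |g b| ^ q) ^ (1 / q) := by
  have hq := hpq.symm.pos
  have hwgq : IntervalIntegrable (fun x => (x - a) * (b - x) * |g x| ^ q) volume a b :=
    (hc.intervalIntegrable_of_nonneg hab.le (fun x _ => by positivity)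
      ((Real.continuous_rpow_const hq.le).comp_aestronglyMeasurable
        hg.1.aestronglyMeasurable.norm)).continuousOn_mul (by fun_prop)
  calc |∫ x in a..b, (x - a) * (b - x) * g x|
      ≤ ∫ x in a..b, (x - a) * (b - x) * |g x| := by
        refine (abs_integral_le_integral_abs hab.le).trans_eq (integral_congr fun x hx => ?_)
        rw [uIcc_of_le hab.le] at hx
        simp only [abs_mul, abs_of_nonneg (sub_nonneg.2 hx.1), abs_of_nonneg (sub_nonneg.2 hx.2)]
    _ ≤ (∫ x in a..b, (x - a) * (b - x)) ^ (1 / p) *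
          (∫ x in a..b, (x - a) * (b - x) * |g x| ^ q) ^ (1 / q) := by
        simp only [integral_of_le hab.le]
        exact integral_mul_abs_le_of_holderConjugate hpq
          ((ae_restrict_mem measurableSet_Ioc).mono fun x hx =>
            mul_nonneg (sub_nonneg.2 hx.1.le) (sub_nonneg.2 hx.2))
          hg.1.aestronglyMeasurable (Continuous.integrableOn_Ioc (by fun_prop)) hwgq.1
    _ ≤ ((b - a) ^ 3 * (1 / 6)) ^ (1 / p) *
          ((b - a) ^ 3 * (1 / 12 * (|g a| ^ q + |g b| ^ q))) ^ (1 / q) := by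
        rw [integral_sub_mul_sub, ← div_eq_mul_one_div, ← mul_assoc, mul_one_div]
        gcongr
        · exact integral_nonneg hab.le fun x hx =>
            mul_nonneg (mul_nonneg (sub_nonneg.2 hx.1) (sub_nonneg.2 hx.2)) (by positivity)
        · exact integral_sub_mul_sub_mul_le_of_convexOn hc hab hwgq
    _ = _ := by
        have hcube : 0 ≤ (b - a) ^ 3 := pow_nonneg (sub_nonneg.2 hab.le) 3
        rw [Real.mul_rpow hcube (by positivity), Real.mul_rpow hcube (by positivity),
          mul_mul_mul_comm, hpq.rpow_one_div_mul_rpow_one_div hcube,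
          Real.mul_rpow (by positivity) (by positivity), Real.div_rpow zero_le_one (by positivity),
          Real.one_rpow]
        ring

theorem stmt11_general (I : Set ℝ) (f : ℝ → ℝ) (a b : ℝ)
    (hab : a < b) (hsub : Set.Icc a b ⊆ interior I)
    (hdiff : ∀ k < 2, DifferentiableOn ℝ (iteratedDeriv k f) (interior I))
    (hint : IntervalIntegrable (iteratedDeriv 2 f) volume a b)
    (p q : ℝ) (hq : 1 < q) (hp : p = q / (q - 1))
    (hc : ConvexOn ℝ (Set.Icc a b) (fun x => |iteratedDeriv 2 f x| ^ q)) :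
    |(f a + f b) / 2 - (1 / (b - a)) * ∫ x in a..b, f x| ≤
      ((b - a) ^ 2 / (2 * (6:ℝ) ^ (1 / p))) * ((1:ℝ) / 12) ^ (1 / q) *
        (|iteratedDeriv 2 f a| ^ q + |iteratedDeriv 2 f b| ^ q) ^ (1 / q) ∧
    ((b - a) ^ 2 / (2 * (6:ℝ) ^ (1 / p))) * ((1:ℝ) / 12) ^ (1 / q) *
        (|iteratedDeriv 2 f a| ^ q + |iteratedDeriv 2 f b| ^ q) ^ (1 / q) ≤
      ((b - a) ^ 2 / (2 * (6:ℝ) ^ (1 / p))) * ((1:ℝ) / 12) ^ (1 / q) *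
        (|iteratedDeriv 2 f a| + |iteratedDeriv 2 f b|) := by
  set D := iteratedDeriv 2 f
  have hba : 0 < b - a := sub_pos.2 hab
  have hpq : p.HolderConjugate q := ((Real.holderConjugate_iff_eq_conjExponent hq).2 hp).symm
  have hderiv : ∀ k < 2, ∀ x ∈ uIcc a b,
      HasDerivAt (iteratedDeriv k f) (iteratedDeriv (k + 1) f x) x := fun k hk x hx =>
    (hdiff k hk).hasDerivAt_iteratedDeriv
      (isOpen_interior.mem_nhds (hsub (uIcc_of_le hab.le ▸ hx)))
  have herror : (f a + f b) / 2 - 1 / (b - a) * ∫ x in a..b, f x =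
      (∫ x in a..b, (x - a) * (b - x) * D x) / (2 * (b - a)) := by
    rw [integral_sub_mul_sub_mul_eq_trapezoid
      (by simpa only [iteratedDeriv_zero] using hderiv 0 two_pos) (hderiv 1 one_lt_two) hint]
    field_simp
  refine ⟨?_, ?_⟩
  · rw [herror, abs_div, abs_of_pos (by positivity : 0 < 2 * (b - a)),
      div_le_iff₀ (by positivity : 0 < 2 * (b - a))]
    refine (abs_integral_sub_mul_sub_mul_le hpq hab hint hc).trans_eq ?_
    field_simp
  · gcongr
    exact Real.rpow_add_rpow_le_add (abs_nonneg _) (abs_nonneg _) hq.le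

theorem stmt11 (I : Set ℝ) (f : ℝ → ℝ) (a b : ℝ)
    (hI : I ⊆ Set.Ici (0:ℝ)) (hab : a < b) (hsub : Set.Icc a b ⊆ interior I)
    (hdiff : ∀ k < 2, DifferentiableOn ℝ (iteratedDeriv k f) (interior I))
    (hint : IntervalIntegrable (iteratedDeriv 2 f) volume a b)
    (p q : ℝ) (hq : 1 < q) (hp : p = q / (q - 1))
    (hc : ConvexOn ℝ (Set.Icc a b) (fun x => |iteratedDeriv 2 f x| ^ q)) :
    |(f a + f b) / 2 - (1 / (b - a)) * ∫ x in a..b, f x| ≤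
      ((b - a) ^ 2 / (2 * (6:ℝ) ^ (1 / p))) * ((1:ℝ) / 12) ^ (1 / q) *
        (|iteratedDeriv 2 f a| ^ q + |iteratedDeriv 2 f b| ^ q) ^ (1 / q) ∧
    ((b - a) ^ 2 / (2 * (6:ℝ) ^ (1 / p))) * ((1:ℝ) / 12) ^ (1 / q) *
        (|iteratedDeriv 2 f a| ^ q + |iteratedDeriv 2 f b| ^ q) ^ (1 / q) ≤
      ((b - a) ^ 2 / (2 * (6:ℝ) ^ (1 / p))) * ((1:ℝ) / 12) ^ (1 / q) *
        (|iteratedDeriv 2 f a| + |iteratedDeriv 2 f b|) :=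
  stmt11_general I f a b hab hsub hdiff hint p q hq hp hc
end

section
/- Let g : [a,b] → [0,∞) be such that g^q is s-concave in the second sense on [a,b] for some s ∈ (0,1] and q ≥ 1, and let λ ∈ [a,b]. Then ∫_0^1 g(ta + (1-t)λ)^q dt ≤ 2^(s-1) g((a+λ)/2)^q. -/
open MeasureTheory intervalIntegral Finset

def sConcaveOn (s : ℝ) (A : Set ℝ) (g : ℝ → ℝ) : Prop :=
  ∀ x ∈ A, ∀ y ∈ A, ∀ t ∈ Set.Icc (0:ℝ) 1,
    t ^ s * g x + (1 - t) ^ s * g y ≤ g (t * x + (1 - t) * y)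

/-! The reflection `t ↦ 1 - t` preserves `∫₀¹`, so `∫₀¹ F` is half of `∫₀¹ (F t + F (1 - t))`;
for `F t = g (t a + (1 - t) λ) ^ q` the two points are symmetric about `(a + λ) / 2`, and
s-concavity at the midpoint bounds `F t + F (1 - t)` by `2 ^ s g ((a + λ) / 2) ^ q`. -/

lemma intervalIntegral_unit_le_half_of_add_reflect_le {F : ℝ → ℝ} {C : ℝ}
    (hF : IntervalIntegrable F volume 0 1)
    (hC : ∀ t ∈ Set.Icc (0:ℝ) 1, F t + F (1 - t) ≤ C) :
    ∫ t in (0:ℝ)..1, F t ≤ C / 2 := by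
  have hF_reflect : IntervalIntegrable (fun t => F (1 - t)) volume 0 1 := by
    simpa using (hF.comp_sub_left 1).symm
  have h_reflect : ∫ t in (0:ℝ)..1, F (1 - t) = ∫ t in (0:ℝ)..1, F t := by
    simp [integral_comp_sub_left]
  have h_sum : ∫ t in (0:ℝ)..1, (F t + F (1 - t)) ≤ ∫ _ in (0:ℝ)..1, C :=
    integral_mono_on zero_le_one (hF.add hF_reflect) intervalIntegrable_const hC
  rw [integral_add hF hF_reflect, h_reflect, intervalIntegral.integral_const] at h_sum
  simp only [sub_zero, smul_eq_mul, one_mul] at h_sum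
  linarith

lemma sConcaveOn.add_le_two_rpow_mul_midpoint {s : ℝ} {A : Set ℝ} {h : ℝ → ℝ}
    (hh : sConcaveOn s A h) {x y : ℝ} (hx : x ∈ A) (hy : y ∈ A) :
    h x + h y ≤ 2 ^ s * h ((x + y) / 2) := by
  have hmid := hh x hx y hy (1 / 2) ⟨by norm_num, by norm_num⟩
  rw [show (1:ℝ) - 1 / 2 = 1 / 2 by norm_num, ← mul_add,
    show 1 / 2 * x + 1 / 2 * y = (x + y) / 2 by ring] at hmid
  have h_inv : (2:ℝ) ^ s * (1 / 2) ^ s = 1 := by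
    rw [← Real.mul_rpow (by norm_num) (by norm_num)]
    norm_num
  calc h x + h y = 2 ^ s * ((1 / 2) ^ s * (h x + h y)) := by rw [← mul_assoc, h_inv, one_mul]
    _ ≤ 2 ^ s * h ((x + y) / 2) := by gcongr

lemma sConcaveOn.intervalIntegral_segment_le {s : ℝ} {A : Set ℝ} {h : ℝ → ℝ}
    (hh : sConcaveOn s A h) (hA : Convex ℝ A) {x y : ℝ} (hx : x ∈ A) (hy : y ∈ A)
    (hint : IntervalIntegrable (fun t => h (t * x + (1 - t) * y)) volume 0 1) :
    ∫ t in (0:ℝ)..1, h (t * x + (1 - t) * y) ≤ 2 ^ (s - 1) * h ((x + y) / 2) := by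
  have h_mem : ∀ t ∈ Set.Icc (0:ℝ) 1, t * x + (1 - t) * y ∈ A := fun t ht =>
    hA hx hy ht.1 (sub_nonneg.2 ht.2) (add_sub_cancel t 1)
  have h_bound := intervalIntegral_unit_le_half_of_add_reflect_le hint fun t ht => by
    have h_pair := hh.add_le_two_rpow_mul_midpoint (h_mem t ht)
      (h_mem (1 - t) ⟨sub_nonneg.2 ht.2, by linarith [ht.1]⟩)
    rwa [show (t * x + (1 - t) * y + ((1 - t) * x + (1 - (1 - t)) * y)) / 2 = (x + y) / 2 by
      ring] at h_pair
  rwa [Real.rpow_sub two_pos, Real.rpow_one, div_mul_eq_mul_div]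

theorem stmt13_general (g : ℝ → ℝ) (a b s q l : ℝ)
    (hsc : sConcaveOn s (Set.Icc a b) (fun x => g x ^ q))
    (hl : l ∈ Set.Icc a b)
    (hint : IntervalIntegrable (fun t => g (t * a + (1 - t) * l) ^ q) volume 0 1) :
    (∫ t in (0:ℝ)..1, g (t * a + (1 - t) * l) ^ q) ≤
      (2:ℝ) ^ (s - 1) * g ((a + l) / 2) ^ q :=
  hsc.intervalIntegral_segment_le (convex_Icc a b) ⟨le_rfl, hl.1.trans hl.2⟩ hl hint

theorem stmt13 (g : ℝ → ℝ) (a b s q l : ℝ)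
    (hab : a ≤ b) (hg : ∀ x ∈ Set.Icc a b, 0 ≤ g x)
    (hs : s ∈ Set.Ioc (0:ℝ) 1) (hq : 1 ≤ q)
    (hsc : sConcaveOn s (Set.Icc a b) (fun x => g x ^ q))
    (hl : l ∈ Set.Icc a b)
    (hint : IntervalIntegrable (fun t => g (t * a + (1 - t) * l) ^ q) volume 0 1) :
    (∫ t in (0:ℝ)..1, g (t * a + (1 - t) * l) ^ q) ≤
      (2:ℝ) ^ (s - 1) * g ((a + l) / 2) ^ q :=
  stmt13_general g a b s q l hsc hl hint
end

section
/- Let f : I ⊂ [0,∞) → ℝ be n-times differentiable on I° with f^(n) ∈ L¹[a,b], a < b, and suppose |f^(n)|^q is concave on [a,b], q > 1, p = q/(q-1). Then |Σ_{m=1}^n (-1)^(n-m+2) ((b-a)^m/(2·m!)) [f^(m-1)(b) − (-1)^m f^(m-1)(a)] + (-1)^n ∫_a^b f(x) dx| ≤ ((b-a)^(n+1)/n!)(1/(np+1))^(1/p)|f^(n)((a+b)/2)|. -/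
open MeasureTheory intervalIntegral Finset

/-!
Integrating by parts `n` times against the kernel `K_n x = ((x - a) ^ n + (x - b) ^ n) / (2 n!)`,
whose derivative is `K_{n-1}`, turns the left-hand side into `|∫ K_n f⁽ⁿ⁾|`. Hölder's inequality
bounds this by `‖K_n‖_p ‖f⁽ⁿ⁾‖_q`. Since `|K_n x| ≤ ((x - a) ^ n + (b - x) ^ n) / (2 n!)`,
convexity of `t ↦ t ^ p` gives `∫ |K_n| ^ p ≤ (b - a) ^ (n p + 1) / ((n p + 1) n! ^ p)`, and the
Hermite–Hadamard inequality for the concave function `|f⁽ⁿ⁾| ^ q` gives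
`∫ |f⁽ⁿ⁾| ^ q ≤ (b - a) |f⁽ⁿ⁾ ((a + b) / 2)| ^ q`.
-/

noncomputable def trapezoidKernel (n : ℕ) (a b x : ℝ) : ℝ :=
  ((x - a) ^ n + (x - b) ^ n) / (2 * n.factorial)

section

variable {a b : ℝ}

theorem continuous_trapezoidKernel (n : ℕ) : Continuous (trapezoidKernel n a b) := by
  unfold trapezoidKernel
  fun_prop

theorem hasDerivAt_trapezoidKernel_succ (n : ℕ) (x : ℝ) :
    HasDerivAt (trapezoidKernel (n + 1) a b) (trapezoidKernel n a b x) x := by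
  have h : HasDerivAt (trapezoidKernel (n + 1) a b)
      (((n + 1) * (x - a) ^ n + (n + 1) * (x - b) ^ n) / (2 * (n + 1).factorial)) x := by
    unfold trapezoidKernel
    simpa using ((((hasDerivAt_id x).sub_const a).fun_pow (n + 1)).fun_add
      (((hasDerivAt_id x).sub_const b).fun_pow (n + 1))).div_const (2 * ((n + 1).factorial : ℝ))
  convert h using 1
  rw [trapezoidKernel, Nat.factorial_succ]
  push_cast
  field_simp

theorem abs_trapezoidKernel_le {n : ℕ} {x : ℝ} (hx : x ∈ Set.Icc a b) :
    |trapezoidKernel n a b x| ≤ ((x - a) ^ n + (b - x) ^ n) / (2 * n.factorial) := by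
  rw [trapezoidKernel, abs_div, abs_of_pos (by positivity : (0 : ℝ) < 2 * n.factorial)]
  gcongr
  calc |(x - a) ^ n + (x - b) ^ n| ≤ |(x - a) ^ n| + |(x - b) ^ n| := abs_add_le _ _
    _ = (x - a) ^ n + (b - x) ^ n := by
      rw [abs_pow, abs_pow, abs_of_nonneg (sub_nonneg.2 hx.1), abs_sub_comm,
        abs_of_nonneg (sub_nonneg.2 hx.2)]

theorem trapezoidKernel_succ_right (n : ℕ) :
    trapezoidKernel (n + 1) a b b = (b - a) ^ (n + 1) / (2 * (n + 1).factorial) := by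
  simp [trapezoidKernel]

theorem trapezoidKernel_succ_left (n : ℕ) :
    trapezoidKernel (n + 1) a b a =
      (-1) ^ (n + 1) * ((b - a) ^ (n + 1) / (2 * (n + 1).factorial)) := by
  rw [trapezoidKernel, sub_self, ← neg_sub b a, neg_pow, zero_pow n.succ_ne_zero, zero_add]
  ring

theorem abs_trapezoidKernel_rpow_le {n : ℕ} {p x : ℝ} (hp : 1 ≤ p) (hx : x ∈ Set.Icc a b) :
    |trapezoidKernel n a b x| ^ p ≤
      ((x - a) ^ (n * p) + (b - x) ^ (n * p)) / (2 * (n.factorial : ℝ) ^ p) := by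
  have hxa : 0 ≤ x - a := sub_nonneg.2 hx.1
  have hbx : 0 ≤ b - x := sub_nonneg.2 hx.2
  have hmean := (convexOn_rpow hp).2 (Set.mem_Ici.2 (pow_nonneg hxa n))
    (Set.mem_Ici.2 (pow_nonneg hbx n)) (by norm_num : (0 : ℝ) ≤ 1 / 2)
    (by norm_num : (0 : ℝ) ≤ 1 / 2) (by norm_num)
  simp only [smul_eq_mul] at hmean
  calc |trapezoidKernel n a b x| ^ p
      ≤ (((x - a) ^ n + (b - x) ^ n) / 2 / n.factorial) ^ p := by
        rw [div_div]
        gcongr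
        exact abs_trapezoidKernel_le hx
    _ = (1 / 2 * (x - a) ^ n + 1 / 2 * (b - x) ^ n) ^ p / (n.factorial : ℝ) ^ p := by
        rw [Real.div_rpow (by positivity) (by positivity)]
        ring_nf
    _ ≤ (1 / 2 * ((x - a) ^ n) ^ p + 1 / 2 * ((b - x) ^ n) ^ p) / (n.factorial : ℝ) ^ p := by
        gcongr
    _ = ((x - a) ^ (n * p) + (b - x) ^ (n * p)) / (2 * (n.factorial : ℝ) ^ p) := by
        rw [Real.rpow_natCast_mul hxa, Real.rpow_natCast_mul hbx]
        ring

theorem integral_sub_lower_rpow {r : ℝ} (hr : -1 < r) :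
    ∫ x in a..b, (x - a) ^ r = (b - a) ^ (r + 1) / (r + 1) := by
  rw [integral_comp_sub_right (· ^ r), sub_self, integral_rpow (Or.inl hr),
    Real.zero_rpow (by linarith), sub_zero]

theorem integral_upper_sub_rpow {r : ℝ} (hr : -1 < r) :
    ∫ x in a..b, (b - x) ^ r = (b - a) ^ (r + 1) / (r + 1) := by
  rw [integral_comp_sub_left (· ^ r), sub_self, integral_rpow (Or.inl hr),
    Real.zero_rpow (by linarith), sub_zero]

theorem integral_abs_trapezoidKernel_rpow_le (n : ℕ) {p : ℝ} (hp : 1 ≤ p) (hab : a ≤ b) :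
    ∫ x in a..b, |trapezoidKernel n a b x| ^ p ≤
      (b - a) ^ (n * p + 1) / ((n * p + 1) * (n.factorial : ℝ) ^ p) := by
  have hnp : 0 ≤ (n : ℝ) * p := by positivity
  have hint_left : IntervalIntegrable (fun x => (x - a) ^ ((n : ℝ) * p)) volume a b :=
    ((continuous_id.sub continuous_const).rpow_const fun _ => Or.inr hnp).intervalIntegrable a b
  have hint_right : IntervalIntegrable (fun x => (b - x) ^ ((n : ℝ) * p)) volume a b :=
    ((continuous_const.sub continuous_id).rpow_const fun _ => Or.inr hnp).intervalIntegrable a b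
  calc ∫ x in a..b, |trapezoidKernel n a b x| ^ p
      ≤ ∫ x in a..b, ((x - a) ^ (n * p) + (b - x) ^ (n * p)) / (2 * (n.factorial : ℝ) ^ p) :=
        integral_mono_on hab (((continuous_trapezoidKernel n).abs.rpow_const
          fun _ => Or.inr (by linarith)).intervalIntegrable a b)
          ((hint_left.add hint_right).div_const _) fun x hx => abs_trapezoidKernel_rpow_le hp hx
    _ = (b - a) ^ (n * p + 1) / ((n * p + 1) * (n.factorial : ℝ) ^ p) := by
        rw [intervalIntegral.integral_div, intervalIntegral.integral_add hint_left hint_right,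
          integral_sub_lower_rpow (by linarith), integral_upper_sub_rpow (by linarith)]
        field_simp
        ring

theorem integral_trapezoidKernel_succ_mul_iteratedDeriv {f : ℝ → ℝ} {n : ℕ} (hab : a ≤ b)
    (hf : ∀ x ∈ Set.Icc a b, DifferentiableAt ℝ (iteratedDeriv n f) x)
    (hint : IntervalIntegrable (iteratedDeriv (n + 1) f) volume a b) :
    ∫ x in a..b, trapezoidKernel (n + 1) a b x * iteratedDeriv (n + 1) f x =
      (b - a) ^ (n + 1) / (2 * (n + 1).factorial) *
          (iteratedDeriv n f b - (-1) ^ (n + 1) * iteratedDeriv n f a) -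
        ∫ x in a..b, trapezoidKernel n a b x * iteratedDeriv n f x := by
  have hderiv : ∀ x ∈ Set.uIcc a b,
      HasDerivAt (iteratedDeriv n f) (iteratedDeriv (n + 1) f x) x := by
    intro x hx
    rw [iteratedDeriv_succ]
    exact (hf x (Set.uIcc_of_le hab ▸ hx)).hasDerivAt
  rw [integral_mul_deriv_eq_deriv_mul (fun x _ => hasDerivAt_trapezoidKernel_succ n x) hderiv
    ((continuous_trapezoidKernel n).intervalIntegrable a b) hint,
    trapezoidKernel_succ_right, trapezoidKernel_succ_left]
  ring

theorem integral_trapezoidKernel_mul_iteratedDeriv {f : ℝ → ℝ} (hab : a ≤ b) :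
    ∀ n : ℕ, (∀ k < n, ∀ x ∈ Set.Icc a b, DifferentiableAt ℝ (iteratedDeriv k f) x) →
      IntervalIntegrable (iteratedDeriv n f) volume a b →
      ∫ x in a..b, trapezoidKernel n a b x * iteratedDeriv n f x =
        (∑ m ∈ Icc 1 n, (-1) ^ (n - m) * ((b - a) ^ m / (2 * m.factorial)) *
          (iteratedDeriv (m - 1) f b - (-1) ^ m * iteratedDeriv (m - 1) f a)) +
        (-1) ^ n * ∫ x in a..b, f x
  | 0, _, _ => by simp [trapezoidKernel]
  | n + 1, hf, hint => by
    have hfn : ∀ x ∈ Set.Icc a b, DifferentiableAt ℝ (iteratedDeriv n f) x :=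
      hf n n.lt_succ_self
    have hintn : IntervalIntegrable (iteratedDeriv n f) volume a b :=
      ContinuousOn.intervalIntegrable_of_Icc hab fun x hx =>
        (hfn x hx).continuousAt.continuousWithinAt
    rw [integral_trapezoidKernel_succ_mul_iteratedDeriv hab hfn hint,
      integral_trapezoidKernel_mul_iteratedDeriv hab n
        (fun k hk => hf k (hk.trans n.lt_succ_self)) hintn,
      sum_Icc_succ_top (Nat.le_add_left 1 n), Nat.sub_self, Nat.add_sub_cancel]
    have hsum : ∑ m ∈ Icc 1 n, (-1 : ℝ) ^ (n + 1 - m) * ((b - a) ^ m / (2 * m.factorial)) *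
          (iteratedDeriv (m - 1) f b - (-1) ^ m * iteratedDeriv (m - 1) f a) =
        -∑ m ∈ Icc 1 n, (-1 : ℝ) ^ (n - m) * ((b - a) ^ m / (2 * m.factorial)) *
          (iteratedDeriv (m - 1) f b - (-1) ^ m * iteratedDeriv (m - 1) f a) := by
      rw [← sum_neg_distrib]
      refine sum_congr rfl fun m hm => ?_
      rw [Nat.sub_add_comm (mem_Icc.1 hm).2, pow_succ]
      ring
    rw [hsum, pow_succ]
    ring

namespace ConcaveOn

variable {g : ℝ → ℝ}

theorem add_apply_reflect_le (hg : ConcaveOn ℝ (Set.Icc a b) g) {x : ℝ}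
    (hx : x ∈ Set.Icc a b) :
    g x + g (a + b - x) ≤ 2 * g ((a + b) / 2) := by
  have hx' : a + b - x ∈ Set.Icc a b := ⟨by linarith [hx.2], by linarith [hx.1]⟩
  have h := hg.2 hx hx' (by norm_num : (0 : ℝ) ≤ 1 / 2) (by norm_num : (0 : ℝ) ≤ 1 / 2)
    (by norm_num)
  rw [smul_eq_mul, smul_eq_mul, smul_eq_mul, smul_eq_mul,
    show 1 / 2 * x + 1 / 2 * (a + b - x) = (a + b) / 2 by ring] at h
  linarith

theorem le_two_mul_apply_midpoint (hg : ConcaveOn ℝ (Set.Icc a b) g)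
    (hg0 : ∀ x ∈ Set.Icc a b, 0 ≤ g x) {x : ℝ} (hx : x ∈ Set.Icc a b) :
    g x ≤ 2 * g ((a + b) / 2) := by
  have hx' : a + b - x ∈ Set.Icc a b := ⟨by linarith [hx.2], by linarith [hx.1]⟩
  linarith [hg.add_apply_reflect_le hx, hg0 _ hx']

/-- The midpoint half of the Hermite–Hadamard inequality, for concave functions. -/
theorem integral_le_mul_apply_midpoint (hab : a ≤ b) (hg : ConcaveOn ℝ (Set.Icc a b) g)
    (hgi : IntervalIntegrable g volume a b) :
    ∫ x in a..b, g x ≤ (b - a) * g ((a + b) / 2) := by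
  have hreflect : ∫ x in a..b, g (a + b - x) = ∫ x in a..b, g x := by
    simp [integral_comp_sub_left g (a + b)]
  have hgi' : IntervalIntegrable (fun x => g (a + b - x)) volume a b := by
    simpa using (hgi.comp_sub_left (a + b)).symm
  have h := integral_mono_on hab (hgi.add hgi') intervalIntegrable_const
    fun x hx => hg.add_apply_reflect_le hx
  rw [integral_add hgi hgi', hreflect, intervalIntegral.integral_const, smul_eq_mul] at h
  linarith

end ConcaveOn

theorem intervalIntegral.integral_mul_le_Lp_mul_Lq_of_nonneg {p q : ℝ}
    (hpq : p.HolderConjugate q) (hab : a ≤ b) {f g : ℝ → ℝ}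
    (hf0 : ∀ x ∈ Set.Ioc a b, 0 ≤ f x) (hg0 : ∀ x ∈ Set.Ioc a b, 0 ≤ g x)
    (hf : MemLp f (.ofReal p) (volume.restrict (Set.Ioc a b)))
    (hg : MemLp g (.ofReal q) (volume.restrict (Set.Ioc a b))) :
    ∫ x in a..b, f x * g x ≤
      (∫ x in a..b, f x ^ p) ^ (1 / p) * (∫ x in a..b, g x ^ q) ^ (1 / q) := by
  simp only [integral_of_le hab]
  exact MeasureTheory.integral_mul_le_Lp_mul_Lq_of_nonneg hpq
    (ae_restrict_of_forall_mem measurableSet_Ioc hf0)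
    (ae_restrict_of_forall_mem measurableSet_Ioc hg0) hf hg

theorem memLp_of_concaveOn_abs_rpow {v : ℝ → ℝ} {q : ℝ} (hq : 0 < q)
    (hc : ConcaveOn ℝ (Set.Icc a b) fun x => |v x| ^ q)
    (hv : AEStronglyMeasurable v (volume.restrict (Set.Ioc a b))) (r : ENNReal) :
    MemLp v r (volume.restrict (Set.Ioc a b)) := by
  refine MemLp.of_bound hv ((2 * |v ((a + b) / 2)| ^ q) ^ (1 / q))
    (ae_restrict_of_forall_mem measurableSet_Ioc fun x hx => ?_)
  rw [Real.norm_eq_abs, one_div, Real.le_rpow_inv_iff_of_pos (abs_nonneg _) (by positivity) hq]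
  exact hc.le_two_mul_apply_midpoint (fun _ _ => by positivity) (Set.Ioc_subset_Icc_self hx)

theorem holder_constant_eq (n : ℕ) {p q r N C : ℝ} (hpq : p.HolderConjugate q) (hr : 0 ≤ r)
    (hN : 0 < N) (hC : 0 ≤ C) :
    (r ^ (n * p + 1) / ((n * p + 1) * N ^ p)) ^ (1 / p) * (r * C ^ q) ^ (1 / q) =
      r ^ (n + 1) / N * (1 / (n * p + 1)) ^ (1 / p) * C := by
  have hp := hpq.pos
  have hq := hpq.symm.pos
  have hs : 0 < (n : ℝ) * p + 1 := by positivity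
  have hexp : ((n : ℝ) * p + 1) * (1 / p) + 1 / q = n + 1 := by
    rw [add_mul, mul_assoc, mul_one_div_cancel hp.ne', mul_one, add_assoc, one_mul, one_div,
      one_div, hpq.inv_add_inv_eq_one]
  rw [Real.div_rpow (by positivity) (by positivity), Real.mul_rpow hs.le (by positivity),
    Real.mul_rpow hr (by positivity), ← Real.rpow_mul hr, ← Real.rpow_mul hN.le,
    ← Real.rpow_mul hC, mul_one_div_cancel hp.ne', mul_one_div_cancel hq.ne', Real.rpow_one,
    Real.rpow_one, Real.div_rpow zero_le_one hs.le, Real.one_rpow]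
  calc r ^ ((n * p + 1) * (1 / p)) / ((n * p + 1) ^ (1 / p) * N) * (r ^ (1 / q) * C)
      = r ^ ((n * p + 1) * (1 / p)) * r ^ (1 / q) / N * (1 / (n * p + 1) ^ (1 / p)) * C := by
        ring
    _ = r ^ (n + 1) / N * (1 / (n * p + 1) ^ (1 / p)) * C := by
        rw [← Real.rpow_add' hr (by rw [hexp]; positivity), hexp]
        norm_cast

theorem abs_integral_trapezoidKernel_mul_le (n : ℕ) {p q : ℝ} (hpq : p.HolderConjugate q)
    (hab : a ≤ b) {v : ℝ → ℝ} (hv : IntervalIntegrable v volume a b)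
    (hc : ConcaveOn ℝ (Set.Icc a b) fun x => |v x| ^ q) :
    |∫ x in a..b, trapezoidKernel n a b x * v x| ≤
      (b - a) ^ (n + 1) / n.factorial * (1 / (n * p + 1)) ^ (1 / p) * |v ((a + b) / 2)| := by
  have hK : MemLp (fun x => |trapezoidKernel n a b x|) (.ofReal p)
      (volume.restrict (Set.Ioc a b)) := by
    obtain ⟨C, hC⟩ := isCompact_Icc.exists_bound_of_continuousOn
      (continuous_trapezoidKernel (a := a) (b := b) n).continuousOn
    exact MemLp.of_bound (continuous_trapezoidKernel n).abs.aestronglyMeasurable C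
      (ae_restrict_of_forall_mem measurableSet_Ioc fun x hx => by
        simpa using hC x (Set.Ioc_subset_Icc_self hx))
  have hvq : MemLp v (.ofReal q) (volume.restrict (Set.Ioc a b)) :=
    memLp_of_concaveOn_abs_rpow hpq.symm.pos hc hv.aestronglyMeasurable _
  have hvq_int : IntervalIntegrable (fun x => |v x| ^ q) volume a b := by
    rw [intervalIntegrable_iff_integrableOn_Ioc_of_le hab]
    have h := hvq.integrable_norm_rpow (by simpa using hpq.symm.pos) ENNReal.ofReal_ne_top
    simp only [ENNReal.toReal_ofReal hpq.symm.nonneg, Real.norm_eq_abs] at h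
    exact h
  calc |∫ x in a..b, trapezoidKernel n a b x * v x|
      ≤ ∫ x in a..b, |trapezoidKernel n a b x| * |v x| := by
        simpa only [abs_mul] using
          abs_integral_le_integral_abs (f := fun x => trapezoidKernel n a b x * v x) hab
    _ ≤ (∫ x in a..b, |trapezoidKernel n a b x| ^ p) ^ (1 / p) *
          (∫ x in a..b, |v x| ^ q) ^ (1 / q) :=
        intervalIntegral.integral_mul_le_Lp_mul_Lq_of_nonneg hpq hab (fun _ _ => abs_nonneg _)
          (fun _ _ => abs_nonneg _) hK hvq.abs
    _ ≤ ((b - a) ^ (n * p + 1) / ((n * p + 1) * (n.factorial : ℝ) ^ p)) ^ (1 / p) *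
          ((b - a) * |v ((a + b) / 2)| ^ q) ^ (1 / q) := by
        have hK0 := integral_nonneg_of_forall (μ := volume) hab fun x =>
          Real.rpow_nonneg (abs_nonneg (trapezoidKernel n a b x)) p
        have hv0 := integral_nonneg_of_forall (μ := volume) hab fun x =>
          Real.rpow_nonneg (abs_nonneg (v x)) q
        have := hpq.pos
        have := hpq.symm.pos
        gcongr
        · exact integral_abs_trapezoidKernel_rpow_le n hpq.lt.le hab
        · exact hc.integral_le_mul_apply_midpoint hab hvq_int
    _ = (b - a) ^ (n + 1) / n.factorial * (1 / (n * p + 1)) ^ (1 / p) * |v ((a + b) / 2)| :=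
        holder_constant_eq n hpq (sub_nonneg.2 hab) (by positivity) (abs_nonneg _)

end

theorem stmt14_general (I : Set ℝ) (f : ℝ → ℝ) (n : ℕ) (a b : ℝ)
    (hab : a < b) (hsub : Set.Icc a b ⊆ interior I)
    (hdiff : ∀ k < n, DifferentiableOn ℝ (iteratedDeriv k f) (interior I))
    (hint : IntervalIntegrable (iteratedDeriv n f) volume a b)
    (p q : ℝ) (hq : 1 < q) (hp : p = q / (q - 1))
    (hc : ConcaveOn ℝ (Set.Icc a b) (fun x => |iteratedDeriv n f x| ^ q)) :
    |(∑ m ∈ Finset.Icc 1 n, (-1:ℝ) ^ (n - m + 2) * ((b - a) ^ m / (2 * (m.factorial : ℝ))) * (iteratedDeriv (m - 1) f b - (-1:ℝ) ^ m * iteratedDeriv (m - 1) f a)) + (-1:ℝ) ^ n * (∫ x in a..b, f x)| ≤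
      ((b - a) ^ (n + 1) / (n.factorial : ℝ)) * ((1 / ((n:ℝ) * p + 1)) ^ (1 / p)) *
        |iteratedDeriv n f ((a + b) / 2)| := by
  have hpq : p.HolderConjugate q := by
    rw [hp]
    exact (Real.HolderConjugate.conjExponent hq).symm
  have hf : ∀ k < n, ∀ x ∈ Set.Icc a b, DifferentiableAt ℝ (iteratedDeriv k f) x :=
    fun k hk x hx => (hdiff k hk).differentiableAt (isOpen_interior.mem_nhds (hsub hx))
  have hsign (m : ℕ) : (-1 : ℝ) ^ (n - m + 2) = (-1) ^ (n - m) := by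
    rw [pow_add, neg_one_sq, mul_one]
  simp only [hsign]
  rw [← integral_trapezoidKernel_mul_iteratedDeriv hab.le n hf hint]
  exact abs_integral_trapezoidKernel_mul_le n hpq hab.le hint hc

theorem stmt14 (I : Set ℝ) (f : ℝ → ℝ) (n : ℕ) (a b : ℝ)
    (hI : I ⊆ Set.Ici (0:ℝ)) (hab : a < b) (hsub : Set.Icc a b ⊆ interior I)
    (hdiff : ∀ k < n, DifferentiableOn ℝ (iteratedDeriv k f) (interior I))
    (hint : IntervalIntegrable (iteratedDeriv n f) volume a b)
    (p q : ℝ) (hq : 1 < q) (hp : p = q / (q - 1))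
    (hc : ConcaveOn ℝ (Set.Icc a b) (fun x => |iteratedDeriv n f x| ^ q)) :
    |(∑ m ∈ Finset.Icc 1 n, (-1:ℝ) ^ (n - m + 2) * ((b - a) ^ m / (2 * (m.factorial : ℝ))) * (iteratedDeriv (m - 1) f b - (-1:ℝ) ^ m * iteratedDeriv (m - 1) f a)) + (-1:ℝ) ^ n * (∫ x in a..b, f x)| ≤
      ((b - a) ^ (n + 1) / (n.factorial : ℝ)) * ((1 / ((n:ℝ) * p + 1)) ^ (1 / p)) *
        |iteratedDeriv n f ((a + b) / 2)| :=
  stmt14_general I f n a b hab hsub hdiff hint p q hq hp hc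
end
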